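/- arXiv:2206.15344 — 8 statements merged into one kernel-verified Lean document; each statement's English description precedes it below -/
import Mathlib

section
/- A branchwise-real tree is continuously gradable if and only if it admits an ℝ-grading, i.e. a strictly order-preserving function into the reals. -/
/-- A tree order: a partial order with a minimum element (the root) in which
the set of predecessors of any element is a chain. -/
def IsTreeOrder (X : Type) [PartialOrder X] : Prop :=
  (∃ r : X, ∀ x : X, r ≤ x) ∧ ∀ x : X, IsChain (· ≤ ·) {y : X | y ≤ x}

/-- A branch: a maximal chain. -/
def IsBranch {X : Type} [PartialOrder X] (B : Set X) : Prop :=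
  IsMaxChain (· ≤ ·) B

/-- A ray: a final segment of a branch. -/
def IsRay {X : Type} [PartialOrder X] (R : Set X) : Prop :=
  ∃ B : Set X, IsBranch B ∧ R ⊆ B ∧ ∀ a ∈ R, ∀ b ∈ B, a ≤ b → b ∈ R

/-- A branchwise-real tree: a tree order in which every branch is
order-isomorphic to a real interval and every two elements have a meet. -/
def IsBranchwiseReal (X : Type) [PartialOrder X] : Prop :=
  IsTreeOrder X ∧
  (∀ B : Set X, IsBranch B → ∃ I : Set ℝ, I.OrdConnected ∧ Nonempty (B ≃o I)) ∧
  (∀ x y : X, ∃ m : X, m ≤ x ∧ m ≤ y ∧ ∀ z : X, z ≤ x → z ≤ y → z ≤ m)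

/-- The set of connected components above `x`: equivalence classes of
`{y | y > x}` under `y ∼ z` iff `∃ w > x, w ≤ y ∧ w ≤ z`. -/
def ComponentsAbove {X : Type} [PartialOrder X] (x : X) : Set (Set X) :=
  {C | ∃ y : X, x < y ∧ C = {z : X | ∃ w : X, x < w ∧ w ≤ y ∧ w ≤ z}}

/-- The degree of a point: the number of connected components above it. -/
noncomputable def degreeOf {X : Type} [PartialOrder X] (x : X) : Cardinal :=
  Cardinal.mk (ComponentsAbove x)

/-- Rigidity: the only order-automorphism is the identity. -/
def Rigid (X : Type) [PartialOrder X] : Prop :=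
  ∀ f : X ≃o X, ∀ x : X, f x = x

/-- A continuous ℝ-grading: a strictly order-preserving map to ℝ whose
restriction to every interval `[x,y]` is an order isomorphism onto `[ℓ x, ℓ y]`. -/
def IsContinuousGrading {X : Type} [PartialOrder X] (ℓ : X → ℝ) : Prop :=
  StrictMono ℓ ∧ ∀ x y : X, x < y →
    ∃ e : Set.Icc x y ≃o Set.Icc (ℓ x) (ℓ y), ∀ z : Set.Icc x y, (e z : ℝ) = ℓ (z : X)

/-- A tree is continuously gradable if it admits a continuous ℝ-grading. -/
def ContinuouslyGradable (X : Type) [PartialOrder X] : Prop :=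
  ∃ ℓ : X → ℝ, IsContinuousGrading ℓ

/-- A rank function: an order-preserving ordinal-valued function whose image on
every branch is downwards-closed, whose fibre at `0` or a limit is an antichain,
and whose fibre at any successor is a disjoint union of pairwise incomparable rays. -/
def IsRankFunction {X : Type} [PartialOrder X] (ρ : X → Ordinal) : Prop :=
  Monotone ρ ∧
  (∀ B : Set X, IsBranch B → ∀ α β : Ordinal, β ≤ α → α ∈ ρ '' B → β ∈ ρ '' B) ∧
  (∀ α : Ordinal, (α = 0 ∨ Order.IsSuccLimit α) → IsAntichain (· ≤ ·) (ρ ⁻¹' {α})) ∧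
  (∀ α β : Ordinal, α = β + 1 →
    ∃ 𝒮 : Set (Set X), (ρ ⁻¹' {α} = ⋃₀ 𝒮) ∧ (∀ R ∈ 𝒮, IsRay R) ∧
      ∀ R ∈ 𝒮, ∀ R' ∈ 𝒮, R ≠ R' → ∀ a ∈ R, ∀ b ∈ R', ¬a ≤ b ∧ ¬b ≤ a)


/-!
By Zorn's lemma there is a maximal continuous grading defined on a down-set and bounded above by
the given strictly monotone `f`; it is total. Indeed, for any `x` the chain `Iic x` is parametrised
by a real interval `K`, and in this parameter one has to extend a continuous strictly increasing
function from an initial segment `A` of `K` to all of `K`, staying below `f`. Let `s` be its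
supremum on `A` (finite because it lies below `f`) and `a` the infimum of `K \ A`. Beyond the cut
take `s + G` with `G t = inf_{u ≤ t} (H u + (t - u))` and `H = min (f - s) (· - a)`: `G` is
1-Lipschitz, strictly increasing, at most `f - s`, and tends to `0` at the cut.
-/

open Set Function

section Grading

variable {α β : Type*}

/-- Continuity of a strictly monotone `g` along `S` is encoded by asking that `g` map every initial
segment `S ∩ Iic x` onto an interval. -/
def IsContinuousGradingOn [Preorder α] (g : α → ℝ) (S : Set α) : Prop :=
  StrictMonoOn g S ∧ ∀ x ∈ S, (g '' (S ∩ Iic x)).OrdConnected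

theorem IsContinuousGradingOn.congr [Preorder α] {g g' : α → ℝ} {S : Set α}
    (hg : IsContinuousGradingOn g S) (h : EqOn g g' S) : IsContinuousGradingOn g' S :=
  ⟨hg.1.congr h, fun x hx => by
    rw [← (h.mono inter_subset_left).image_eq]
    exact hg.2 x hx⟩

theorem IsContinuousGradingOn.mono_of_isLowerSet [Preorder α] {g : α → ℝ} {S T : Set α}
    (hg : IsContinuousGradingOn g S) (hTS : T ⊆ S) (hT : IsLowerSet T) :
    IsContinuousGradingOn g T := by
  refine ⟨hg.1.mono hTS, fun x hx => ?_⟩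
  rw [inter_eq_right.2 (hT.Iic_subset hx), ← inter_eq_right.2 ((hT.Iic_subset hx).trans hTS)]
  exact hg.2 x (hTS hx)

theorem isContinuousGradingOn_iUnion [Preorder α] {ι : Sort*} {g : α → ℝ} {S : ι → Set α}
    (hS : ∀ i, IsLowerSet (S i)) (hg : ∀ i, IsContinuousGradingOn g (S i)) :
    IsContinuousGradingOn g (⋃ i, S i) := by
  refine ⟨fun a _ b hb hab => ?_, fun x hx => ?_⟩
  · obtain ⟨i, hbi⟩ := mem_iUnion.1 hb
    exact (hg i).1 (hS i hab.le hbi) hbi hab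
  · obtain ⟨i, hxi⟩ := mem_iUnion.1 hx
    rw [inter_eq_right.2 (((hS i).Iic_subset hxi).trans (subset_iUnion S i)),
      ← inter_eq_right.2 ((hS i).Iic_subset hxi)]
    exact (hg i).2 x hxi

theorem IsContinuousGradingOn.ordConnected_image [LinearOrder α] {g : α → ℝ} {S : Set α}
    (hg : IsContinuousGradingOn g S) : (g '' S).OrdConnected := by
  constructor
  rintro _ ⟨t₁, ht₁, rfl⟩ _ ⟨t₂, ht₂, rfl⟩
  have hmax : max t₁ t₂ ∈ S := by rcases max_choice t₁ t₂ with h | h <;> rw [h] <;> assumption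
  exact ((hg.2 _ hmax).out (mem_image_of_mem g ⟨ht₁, le_max_left _ _⟩)
    (mem_image_of_mem g ⟨ht₂, le_max_right _ _⟩)).trans (image_mono inter_subset_left)

section Chain

variable [PartialOrder α] [Preorder β] {p : α → β} {S : Set α}

theorem StrictMonoOn.le_iff_le_of_isChain (hp : StrictMonoOn p S) (hS : IsChain (· ≤ ·) S)
    {a b : α} (ha : a ∈ S) (hb : b ∈ S) : p a ≤ p b ↔ a ≤ b := by
  refine ⟨fun h => ?_, fun h => hp.monotoneOn ha hb h⟩
  rcases hS.total ha hb with hab | hba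
  · exact hab
  rcases hba.lt_or_eq with hlt | heq
  · exact absurd h (hp hb ha hlt).not_ge
  · exact heq.ge

theorem StrictMonoOn.injOn_of_isChain (hp : StrictMonoOn p S) (hS : IsChain (· ≤ ·) S) :
    InjOn p S := fun _ ha _ hb h =>
  le_antisymm ((hp.le_iff_le_of_isChain hS ha hb).1 h.le)
    ((hp.le_iff_le_of_isChain hS hb ha).1 h.ge)

theorem StrictMonoOn.image_inter_Iic_of_isChain (hp : StrictMonoOn p S) (hS : IsChain (· ≤ ·) S)
    {x : α} (hx : x ∈ S) : p '' (S ∩ Iic x) = p '' S ∩ Iic (p x) := by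
  ext y
  constructor
  · rintro ⟨z, ⟨hz, hzx⟩, rfl⟩
    exact ⟨mem_image_of_mem p hz, hp.monotoneOn hz hx hzx⟩
  · rintro ⟨⟨z, hz, rfl⟩, hzx⟩
    exact ⟨z, ⟨hz, (hp.le_iff_le_of_isChain hS hz hx).1 hzx⟩, rfl⟩

theorem StrictMonoOn.strictMonoOn_invFunOn_of_isChain [Nonempty α] (hp : StrictMonoOn p S)
    (hS : IsChain (· ≤ ·) S) : StrictMonoOn (invFunOn p S) (p '' S) := by
  rintro _ ⟨a, ha, rfl⟩ _ ⟨b, hb, rfl⟩ hab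
  have hinv := (hp.injOn_of_isChain hS).leftInvOn_invFunOn
  rw [hinv ha, hinv hb]
  exact lt_of_le_of_ne ((hp.le_iff_le_of_isChain hS ha hb).1 hab.le) fun h => hab.ne (h ▸ rfl)

theorem IsContinuousGradingOn.comp {g : β → ℝ} (hg : IsContinuousGradingOn g (p '' S))
    (hp : StrictMonoOn p S) (hS : IsChain (· ≤ ·) S) : IsContinuousGradingOn (g ∘ p) S :=
  ⟨hg.1.comp hp (mapsTo_image p S), fun x hx => by
    rw [image_comp, hp.image_inter_Iic_of_isChain hS hx]
    exact hg.2 _ (mem_image_of_mem p hx)⟩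

end Chain

end Grading

theorem IsPreconnected.union_of_mem_closure {X : Type*} [TopologicalSpace X] {s t : Set X} {x : X}
    (hs : IsPreconnected s) (ht : IsPreconnected t) (hxs : x ∈ closure s) (hxt : x ∈ closure t)
    (hx : x ∈ s ∪ t) : IsPreconnected (s ∪ t) := by
  have hs' := hs.subset_closure (subset_insert x s) (insert_subset hxs subset_closure)
  have ht' := ht.subset_closure (subset_insert x t) (insert_subset hxt subset_closure)
  have := hs'.union x (mem_insert x s) (mem_insert x t) ht'
  rwa [← insert_union_distrib, insert_eq_of_mem hx] at this

section RealLine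

/-- `G` is the inf-convolution `G t = inf_{u ≤ t} (H u + (t - u))`. -/
theorem exists_lipschitzOnWith_strictMonoOn_le {J : Set ℝ} {H : ℝ → ℝ} (hJ : J.OrdConnected)
    (hH : StrictMonoOn H J) (hH₀ : ∀ t ∈ J, 0 ≤ H t) :
    ∃ G : ℝ → ℝ, LipschitzOnWith 1 G J ∧ StrictMonoOn G J ∧ ∀ t ∈ J, 0 ≤ G t ∧ G t ≤ H t := by
  set G : ℝ → ℝ := fun t => sInf ((fun u => H u + (t - u)) '' (J ∩ Iic t))
  have hle : ∀ t, ∀ u ∈ J, u ≤ t → G t ≤ H u + (t - u) := fun t u hu hut =>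
    csInf_le ⟨0, forall_mem_image.2 fun v hv => add_nonneg (hH₀ v hv.1) (sub_nonneg.2 hv.2)⟩
      (mem_image_of_mem _ ⟨hu, hut⟩)
  have hge : ∀ t ∈ J, ∀ b, (∀ u ∈ J, u ≤ t → b ≤ H u + (t - u)) → b ≤ G t := fun t ht b hb =>
    le_csInf ⟨_, mem_image_of_mem _ ⟨ht, self_mem_Iic⟩⟩
      (forall_mem_image.2 fun u hu => hb u hu.1 hu.2)
  have hGH : ∀ t ∈ J, G t ≤ H t := fun t ht => by simpa using hle t t ht le_rfl
  have hlip : ∀ t ∈ J, ∀ t' ∈ J, t ≤ t' → G t' ≤ G t + (t' - t) := fun t ht t' ht' htt' => by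
    have := hge t ht (G t' - (t' - t)) fun u hu hut => by linarith [hle t' u hu (hut.trans htt')]
    linarith
  have hmono : StrictMonoOn G J := by
    intro t ht t' ht' htt'
    set m := (t + t') / 2 with hmdef
    have hm : m ∈ J := hJ.out ht ht' ⟨by linarith, by linarith⟩
    have hHm : H t < H m := hH ht hm (by linarith)
    have hbound := hge t' ht' (min (G t + (t' - t) / 2) (H m)) fun u hu hut => by
      rcases le_or_gt u t with hut' | htu
      · linarith [hle t u hu hut', min_le_left (G t + (t' - t) / 2) (H m)]
      rcases le_or_gt u m with hum | hmu
      · linarith [(hH ht hu htu).le, hGH t ht, min_le_left (G t + (t' - t) / 2) (H m)]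
      · linarith [hH hm hu hmu, min_le_right (G t + (t' - t) / 2) (H m)]
    exact (lt_min (by linarith) (by linarith [hGH t ht])).trans_le hbound
  refine ⟨G, LipschitzOnWith.of_dist_le_mul fun t ht t' ht' => ?_, hmono, fun t ht =>
    ⟨hge t ht 0 fun u hu hut => add_nonneg (hH₀ u hu) (sub_nonneg.2 hut), hGH t ht⟩⟩
  rw [Real.dist_eq, Real.dist_eq, NNReal.coe_one, one_mul, abs_le]
  rcases le_total t t' with htt' | ht't
  · have := hlip t ht t' ht' htt'
    have := hmono.monotoneOn ht ht' htt'
    rw [abs_of_nonpos (by linarith)]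
    constructor <;> linarith
  · have := hlip t' ht' t ht ht't
    have := hmono.monotoneOn ht' ht ht't
    rw [abs_of_nonneg (by linarith)]
    constructor <;> linarith

variable {K A : Set ℝ}

theorem lt_of_mem_of_mem_diff (hA : ∀ t ∈ A, ∀ u ∈ K, u ≤ t → u ∈ A) {t k : ℝ} (ht : t ∈ A)
    (hk : k ∈ K \ A) : t < k :=
  lt_of_not_ge fun hkt => hk.2 (hA t ht k hk.1 hkt)

theorem exists_isGreatest_or_isLeast_diff (hK : K.OrdConnected) (hAK : A ⊆ K)
    (hA : ∀ t ∈ A, ∀ u ∈ K, u ≤ t → u ∈ A) (hA₀ : A.Nonempty) {k : ℝ} (hk : k ∈ K \ A) :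
    (∃ σ, IsGreatest A σ) ∨ ∃ σ, IsLeast (K \ A) σ := by
  obtain ⟨t₀, ht₀⟩ := hA₀
  have hσ : IsLUB A (sSup A) :=
    isLUB_csSup ⟨t₀, ht₀⟩ ⟨k, fun t ht => (lt_of_mem_of_mem_diff hA ht hk).le⟩
  by_cases hσA : sSup A ∈ A
  · exact Or.inl ⟨_, hσA, hσ.1⟩
  refine Or.inr ⟨_, ⟨hK.out (hAK ht₀) hk.1 ⟨hσ.1 ht₀, ?_⟩, hσA⟩, fun k' hk' => ?_⟩ <;>
    exact hσ.2 fun t ht => (lt_of_mem_of_mem_diff hA ht ‹_›).le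

theorem Set.OrdConnected.sdiff_of_lower (hK : K.OrdConnected)
    (hA : ∀ t ∈ A, ∀ u ∈ K, u ≤ t → u ∈ A) : (K \ A).OrdConnected :=
  ⟨fun k hk _ hk' u hu => ⟨hK.out hk.1 hk'.1 hu, fun huA => hk.2 (hA u huA k hk.1 hu.1)⟩⟩

theorem StrictMonoOn.piecewise_of_le [DecidablePred (· ∈ A)] {g h : ℝ → ℝ} {s : ℝ}
    (hK : K.OrdConnected) (hA : ∀ t ∈ A, ∀ u ∈ K, u ≤ t → u ∈ A) (hg : StrictMonoOn g A)
    (hh : StrictMonoOn h (K \ A)) (hgs : ∀ t ∈ A, g t ≤ s) (hsh : ∀ k ∈ K \ A, s ≤ h k) :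
    StrictMonoOn (A.piecewise g h) K := by
  intro t ht t' ht' htt'
  by_cases ht'A : t' ∈ A
  · have htA : t ∈ A := hA t' ht'A t ht htt'.le
    simpa [htA, ht'A] using hg htA ht'A htt'
  by_cases htA : t ∈ A
  · simp only [piecewise_eq_of_mem A g h htA, piecewise_eq_of_notMem A g h ht'A]
    obtain ⟨u, htu, hut'⟩ := exists_between htt'
    have huK : u ∈ K := hK.out ht ht' ⟨htu.le, hut'.le⟩
    by_cases huA : u ∈ A
    · calc g t < g u := hg htA huA htu
        _ ≤ s := hgs u huA
        _ ≤ h t' := hsh t' ⟨ht', ht'A⟩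
    · calc g t ≤ s := hgs t htA
        _ ≤ h u := hsh u ⟨huK, huA⟩
        _ < h t' := hh ⟨huK, huA⟩ ⟨ht', ht'A⟩ hut'
  · simpa [htA, ht'A] using hh ⟨ht, htA⟩ ⟨ht', ht'A⟩ htt'

theorem IsContinuousGradingOn.piecewise [DecidablePred (· ∈ A)] {g h : ℝ → ℝ} {s : ℝ}
    (hK : K.OrdConnected) (hAK : A ⊆ K) (hA : ∀ t ∈ A, ∀ u ∈ K, u ≤ t → u ∈ A)
    (hg : IsContinuousGradingOn g A) (hh : StrictMonoOn h (K \ A)) (hhc : ContinuousOn h (K \ A))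
    (hgs : IsLUB (g '' A) s) (hhs : ∀ k ∈ K \ A, IsGLB (h '' (K \ A ∩ Iic k)) s)
    (hs : s ∈ g '' A ∪ h '' (K \ A)) : IsContinuousGradingOn (A.piecewise g h) K := by
  have hgA : EqOn (A.piecewise g h) g A := piecewise_eqOn A g h
  have hhJ : EqOn (A.piecewise g h) h (K \ A) := fun k hk => piecewise_eq_of_notMem A g h hk.2
  have hsh : ∀ k ∈ K \ A, s ≤ h k := fun k hk =>
    (hhs k hk).1 (mem_image_of_mem h ⟨hk, self_mem_Iic⟩)
  refine ⟨hg.1.piecewise_of_le hK hA hh (fun t ht => hgs.1 (mem_image_of_mem g ht)) hsh,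
    fun t ht => ?_⟩
  by_cases htA : t ∈ A
  · have hKt : K ∩ Iic t = A ∩ Iic t :=
      subset_antisymm (fun u hu => ⟨hA t htA u hu.1 hu.2, hu.2⟩) (inter_subset_inter_left _ hAK)
    rw [hKt, (hgA.mono inter_subset_left).image_eq]
    exact hg.2 t htA
  have htJ : t ∈ K \ A := ⟨ht, htA⟩
  have hKt : K ∩ Iic t = A ∪ (K \ A ∩ Iic t) := by
    ext u
    by_cases huA : u ∈ A
    · simp only [mem_inter_iff, mem_union, huA, true_or, iff_true]
      exact ⟨hAK huA, (lt_of_mem_of_mem_diff hA huA htJ).le⟩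
    · simp [huA]
  rw [hKt, image_union, hgA.image_eq, (hhJ.mono inter_subset_left).image_eq,
    ← isPreconnected_iff_ordConnected]
  refine (isPreconnected_iff_ordConnected.2 hg.ordConnected_image).union_of_mem_closure
    (((hK.sdiff_of_lower hA).inter ordConnected_Iic).isPreconnected.image h
      (hhc.mono inter_subset_left))
    (hgs.mem_closure hgs.nonempty) ((hhs t htJ).mem_closure ⟨h t, t, ⟨htJ, self_mem_Iic⟩, rfl⟩) ?_
  rcases hs with hs | ⟨k, hk, rfl⟩
  · exact Or.inl hs
  · exact Or.inr ⟨k, ⟨hk, (hh.le_iff_le hk htJ).1 (hsh t htJ)⟩, rfl⟩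

theorem exists_continuousOn_strictMonoOn_isGLB {J : Set ℝ} {F : ℝ → ℝ} {s : ℝ}
    (hJ : J.OrdConnected) (hJb : BddBelow J) (hF : StrictMonoOn F J) (hFs : ∀ k ∈ J, s ≤ F k) :
    ∃ h : ℝ → ℝ, ContinuousOn h J ∧ StrictMonoOn h J ∧ (∀ k ∈ J, h k ≤ F k) ∧
      ∀ k ∈ J, IsGLB (h '' (J ∩ Iic k)) s := by
  set a := sInf J
  obtain ⟨G, hGlip, hGmono, hG⟩ := exists_lipschitzOnWith_strictMonoOn_le
    (H := fun k => min (F k - s) (k - a)) hJ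
    (fun k hk k' hk' hkk' => min_lt_min (by linarith [hF hk hk' hkk']) (by linarith))
    (fun k hk => le_min (sub_nonneg.2 (hFs k hk)) (sub_nonneg.2 (csInf_le hJb hk)))
  refine ⟨fun k => s + G k, continuousOn_const.add hGlip.continuousOn,
    fun k hk k' hk' hkk' => (add_lt_add_iff_left s).2 (hGmono hk hk' hkk'),
    fun k hk => by linarith [(hG k hk).2, min_le_left (F k - s) (k - a)],
    fun k hk => ⟨forall_mem_image.2 fun u hu => le_add_of_nonneg_right (hG u hu.1).1,
      fun b hb => ?_⟩⟩
  -- `G` tends to `0` at the left end of `J`, since `G u ≤ u - a`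
  by_contra! hsb
  obtain ⟨u, hu, -, hua⟩ := (isGLB_csInf ⟨k, hk⟩ hJb).exists_between
    (show a < a + (b - s) by linarith)
  have hmin : min u k ∈ J := by rcases min_choice u k with h | h <;> rw [h] <;> assumption
  have := hb (mem_image_of_mem _ ⟨hmin, min_le_right u k⟩)
  linarith [(hG _ hmin).2, min_le_right (F (min u k) - s) (min u k - a), min_le_left u k]

theorem IsContinuousGradingOn.exists_extension {F g : ℝ → ℝ} (hK : K.OrdConnected)
    (hAK : A ⊆ K) (hA : ∀ t ∈ A, ∀ u ∈ K, u ≤ t → u ∈ A) (hA₀ : A.Nonempty)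
    (hF : StrictMonoOn F K) (hg : IsContinuousGradingOn g A) (hgF : ∀ t ∈ A, g t ≤ F t) :
    ∃ g' : ℝ → ℝ, EqOn g' g A ∧ IsContinuousGradingOn g' K ∧ ∀ t ∈ K, g' t ≤ F t := by
  classical
  rcases (K \ A).eq_empty_or_nonempty with hJ | ⟨k₀, hk₀⟩
  · obtain rfl : K = A := (sdiff_eq_empty.1 hJ).antisymm hAK
    exact ⟨g, eqOn_refl g K, hg, hgF⟩
  have hgF' : ∀ t ∈ A, ∀ k ∈ K \ A, g t ≤ F k := fun t ht k hk =>
    (hgF t ht).trans (hF (hAK ht) hk.1 (lt_of_mem_of_mem_diff hA ht hk)).le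
  set s := sSup (g '' A)
  have hgs : IsLUB (g '' A) s :=
    isLUB_csSup (hA₀.image g) ⟨F k₀, forall_mem_image.2 fun t ht => hgF' t ht k₀ hk₀⟩
  obtain ⟨t₀, ht₀⟩ := hA₀
  obtain ⟨h, hhc, hh, hhF, hhs⟩ := exists_continuousOn_strictMonoOn_isGLB (hK.sdiff_of_lower hA)
    ⟨t₀, fun k hk => (lt_of_mem_of_mem_diff hA ht₀ hk).le⟩ (hF.mono sdiff_subset)
    fun k hk => hgs.2 (forall_mem_image.2 fun t ht => hgF' t ht k hk)
  refine ⟨A.piecewise g h, piecewise_eqOn A g h,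
    hg.piecewise hK hAK hA hh hhc hgs hhs ?_, fun t ht => ?_⟩
  · rcases exists_isGreatest_or_isLeast_diff hK hAK hA ⟨t₀, ht₀⟩ hk₀ with ⟨σ, hσ⟩ | ⟨σ, hσ⟩
    · have hgσ : IsGreatest (g '' A) (g σ) :=
        ⟨mem_image_of_mem g hσ.1, forall_mem_image.2 fun t ht => hg.1.monotoneOn ht hσ.1 (hσ.2 ht)⟩
      exact Or.inl (hgs.unique hgσ.isLUB ▸ hgσ.1)
    · have hσs := hhs σ hσ.1
      rw [show K \ A ∩ Iic σ = {σ} from ?_, image_singleton] at hσs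
      · exact Or.inr ⟨σ, hσ.1, isGLB_singleton.unique hσs⟩
      exact subset_antisymm (fun k hk => le_antisymm hk.2 (hσ.2 hk.1))
        (singleton_subset_iff.2 ⟨hσ.1, self_mem_Iic⟩)
  · by_cases htA : t ∈ A
    · simpa [htA] using hgF t htA
    · simpa [htA] using hhF t ⟨ht, htA⟩

end RealLine

section Tree

variable {X : Type}

theorem exists_strictMonoOn_Iic_ordConnected [PartialOrder X]
    (hbr : ∀ B : Set X, IsBranch B → ∃ I : Set ℝ, I.OrdConnected ∧ Nonempty (B ≃o I)) {x : X}
    (hx : IsChain (· ≤ ·) (Iic x)) :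
    ∃ p : X → ℝ, StrictMonoOn p (Iic x) ∧ (p '' Iic x).OrdConnected := by
  classical
  obtain ⟨B, hB, hxB⟩ := hx.exists_maxChain
  obtain ⟨I, hI, ⟨φ⟩⟩ := hbr B hB
  set p : X → ℝ := fun y => if hy : y ∈ B then φ ⟨y, hy⟩ else 0
  have hp : ∀ y (hy : y ∈ B), p y = φ ⟨y, hy⟩ := fun y hy => dif_pos hy
  refine ⟨p, fun y hy z hz hyz => ?_, ?_⟩
  · rw [hp y (hxB hy), hp z (hxB hz)]
    exact φ.strictMono (Subtype.mk_lt_mk.2 hyz)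
  suffices p '' Iic x = I ∩ Iic (p x) from this ▸ hI.inter ordConnected_Iic
  ext t
  constructor
  · rintro ⟨y, hy, rfl⟩
    rw [hp y (hxB hy), hp x (hxB self_mem_Iic)]
    exact ⟨(φ _).2, φ.monotone (Subtype.mk_le_mk.2 hy)⟩
  · rintro ⟨htI, htx⟩
    refine ⟨φ.symm ⟨t, htI⟩, ?_, by rw [hp _ (φ.symm ⟨t, htI⟩).2]; simp⟩
    rw [hp x (hxB self_mem_Iic)] at htx
    exact φ.symm_apply_le.2 (Subtype.mk_le_mk.2 htx)

structure PartialGrading [PartialOrder X] (f : X → ℝ) where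
  dom : Set X
  toFun : X → ℝ
  isLowerSet_dom : IsLowerSet dom
  dom_nonempty : dom.Nonempty
  isContinuousGradingOn : IsContinuousGradingOn toFun dom
  le : ∀ x ∈ dom, toFun x ≤ f x

namespace PartialGrading

variable [PartialOrder X] {f : X → ℝ}

instance : Preorder (PartialGrading f) where
  le P Q := P.dom ⊆ Q.dom ∧ EqOn P.toFun Q.toFun P.dom
  le_refl P := ⟨subset_rfl, eqOn_refl _ _⟩
  le_trans _ _ _ hPQ hQR := ⟨hPQ.1.trans hQR.1, hPQ.2.trans (hQR.2.mono hPQ.1)⟩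

def ofRoot (hf : StrictMono f) {r : X} (hr : ∀ x, r ≤ x) : PartialGrading f where
  dom := {r}
  toFun := f
  isLowerSet_dom _ _ hba hb := le_antisymm (hba.trans_eq hb) (hr _)
  dom_nonempty := singleton_nonempty r
  isContinuousGradingOn := ⟨hf.strictMonoOn _, fun x hx => by
    rw [mem_singleton_iff.1 hx, inter_eq_left.2 (singleton_subset_iff.2 self_mem_Iic),
      image_singleton]
    exact ordConnected_singleton⟩
  le _ _ := le_rfl

theorem bddAbove_of_isChain (c : Set (PartialGrading f)) (hc : IsChain (· ≤ ·) c)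
    (hne : c.Nonempty) : BddAbove c := by
  classical
  set toFun : X → ℝ := fun x => if h : ∃ P : c, x ∈ P.1.dom then h.choose.1.toFun x else 0
  have htoFun : ∀ P : c, EqOn toFun P.1.toFun P.1.dom := by
    intro P x hx
    have h : ∃ Q : c, x ∈ Q.1.dom := ⟨P, hx⟩
    simp only [toFun, dif_pos h]
    rcases hc.total h.choose.2 P.2 with hQP | hPQ
    · exact hQP.2 h.choose_spec
    · exact (hPQ.2 hx).symm
  obtain ⟨P₀, hP₀⟩ := hne
  refine ⟨⟨⋃ P : c, P.1.dom, toFun, isLowerSet_iUnion fun P => P.1.isLowerSet_dom,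
    P₀.dom_nonempty.mono (subset_iUnion (fun P : c => P.1.dom) ⟨P₀, hP₀⟩),
    isContinuousGradingOn_iUnion (fun P => P.1.isLowerSet_dom)
      fun P => P.1.isContinuousGradingOn.congr (htoFun P).symm, fun x hx => ?_⟩,
    fun P hP => ⟨subset_iUnion (fun P : c => P.1.dom) ⟨P, hP⟩, (htoFun ⟨P, hP⟩).symm⟩⟩
  obtain ⟨P, hxP⟩ := mem_iUnion.1 hx
  exact (htoFun P hxP).trans_le (P.1.le x hxP)

theorem exists_extension_Iic (P : PartialGrading f) (hf : StrictMono f) {r : X}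
    (hr : ∀ x, r ≤ x) {x₀ : X} (hL : IsChain (· ≤ ·) (Iic x₀)) {p : X → ℝ}
    (hp : StrictMonoOn p (Iic x₀)) (hK : (p '' Iic x₀).OrdConnected) :
    ∃ ℓ : X → ℝ, IsContinuousGradingOn ℓ (Iic x₀) ∧ EqOn ℓ P.toFun (P.dom ∩ Iic x₀) ∧
      ∀ x ∈ Iic x₀, ℓ x ≤ f x := by
  have : Nonempty X := ⟨r⟩
  set C := P.dom ∩ Iic x₀
  set q := invFunOn p (Iic x₀)
  have hqp : LeftInvOn q p (Iic x₀) := (hp.injOn_of_isChain hL).leftInvOn_invFunOn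
  have hq : StrictMonoOn q (p '' Iic x₀) := hp.strictMonoOn_invFunOn_of_isChain hL
  have hCL : p '' C ⊆ p '' Iic x₀ := image_mono inter_subset_right
  have hrC : r ∈ C := ⟨P.isLowerSet_dom (hr _) P.dom_nonempty.some_mem, hr x₀⟩
  have hCK : ∀ t ∈ p '' C, ∀ u ∈ p '' Iic x₀, u ≤ t → u ∈ p '' C := by
    rintro _ ⟨c, hc, rfl⟩ _ ⟨z, hz, rfl⟩ hzc
    exact ⟨z, ⟨P.isLowerSet_dom ((hp.le_iff_le_of_isChain hL hz hc.2).1 hzc) hc.1, hz⟩, rfl⟩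
  have hgC : IsContinuousGradingOn (P.toFun ∘ q) (p '' C) := by
    refine IsContinuousGradingOn.comp ?_ (hq.mono hCL) (isChain_of_trichotomous _)
    rw [hqp.image_image' inter_subset_right]
    exact P.isContinuousGradingOn.mono_of_isLowerSet inter_subset_left
      (P.isLowerSet_dom.inter (isLowerSet_Iic x₀))
  have hgCf : ∀ t ∈ p '' C, (P.toFun ∘ q) t ≤ (f ∘ q) t := by
    rintro _ ⟨c, hc, rfl⟩
    simpa [hqp hc.2] using P.le c hc.1
  obtain ⟨g, hgC', hg, hgf⟩ := hgC.exists_extension hK hCL hCK ⟨p r, r, hrC, rfl⟩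
    (hf.comp_strictMonoOn hq) hgCf
  refine ⟨g ∘ p, hg.comp hp hL, fun x hx => ?_, fun x hx => ?_⟩
  · simpa [hqp hx.2] using hgC' (mem_image_of_mem p hx)
  · simpa [hqp hx] using hgf (p x) (mem_image_of_mem p hx)

theorem exists_le_mem_dom (P : PartialGrading f) (hf : StrictMono f) {r : X} (hr : ∀ x, r ≤ x)
    {x₀ : X} (hL : IsChain (· ≤ ·) (Iic x₀)) {p : X → ℝ} (hp : StrictMonoOn p (Iic x₀))
    (hK : (p '' Iic x₀).OrdConnected) : ∃ Q : PartialGrading f, P ≤ Q ∧ x₀ ∈ Q.dom := by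
  classical
  obtain ⟨ℓ, hℓ, hℓP, hℓf⟩ := P.exists_extension_Iic hf hr hL hp hK
  set D := P.dom
  have hDℓ : EqOn (D.piecewise P.toFun ℓ) ℓ (Iic x₀) := fun x hx => by
    by_cases hxD : x ∈ D
    · simp [hxD, hℓP ⟨hxD, hx⟩]
    · simp [hxD]
  refine ⟨⟨D ∪ Iic x₀, D.piecewise P.toFun ℓ, P.isLowerSet_dom.union (isLowerSet_Iic x₀),
    P.dom_nonempty.mono subset_union_left, ?_, ?_⟩,
    ⟨subset_union_left, (piecewise_eqOn D _ _).symm⟩, Or.inr self_mem_Iic⟩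
  · rw [union_eq_iUnion]
    refine isContinuousGradingOn_iUnion (fun b => ?_) fun b => ?_ <;> cases b
    exacts [isLowerSet_Iic x₀, P.isLowerSet_dom, hℓ.congr hDℓ.symm,
      P.isContinuousGradingOn.congr (piecewise_eqOn D _ _).symm]
  · rintro x (hx | hx)
    · simpa [hx] using P.le x hx
    · simpa [hDℓ hx] using hℓf x hx

end PartialGrading

theorem IsContinuousGradingOn.isContinuousGrading [PartialOrder X] {ℓ : X → ℝ}
    (hℓ : IsContinuousGradingOn ℓ univ) (hchain : ∀ x : X, IsChain (· ≤ ·) (Iic x)) :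
    IsContinuousGrading ℓ := by
  have hmono : StrictMono ℓ := strictMonoOn_univ.1 hℓ.1
  refine ⟨hmono, fun x y hxy => ?_⟩
  have hle : ∀ a b : Icc x y, ℓ a ≤ ℓ b ↔ a ≤ b := fun a b =>
    hmono.strictMonoOn _ |>.le_iff_le_of_isChain (hchain y) a.2.2 b.2.2
  set e : Icc x y ↪o Icc (ℓ x) (ℓ y) := OrderEmbedding.ofMapLEIff
    (fun z => ⟨ℓ z, hmono.monotone z.2.1, hmono.monotone z.2.2⟩) hle
  refine ⟨OrderIso.ofSurjective e fun c => ?_, fun _ => rfl⟩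
  have hc : (c : ℝ) ∈ ℓ '' (univ ∩ Iic y) :=
    (hℓ.2 y trivial).out ⟨x, ⟨trivial, hxy.le⟩, rfl⟩ ⟨y, ⟨trivial, le_rfl⟩, rfl⟩ c.2
  obtain ⟨z, ⟨-, hzy⟩, hz⟩ := hc
  have hxz : x ≤ z := (hmono.strictMonoOn _ |>.le_iff_le_of_isChain (hchain y) hxy.le hzy).1
    (hz ▸ c.2.1)
  exact ⟨⟨z, hxz, hzy⟩, Subtype.ext hz⟩

end Tree

/-- A branchwise-real tree is continuously gradable iff it admits a strictly
order-preserving function into the reals. -/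
theorem stmt_3 (X : Type) [PartialOrder X] (hX : IsBranchwiseReal X) :
    ContinuouslyGradable X ↔ ∃ f : X → ℝ, StrictMono f := by
  refine ⟨fun ⟨ℓ, hℓ⟩ => ⟨ℓ, hℓ.1⟩, fun ⟨f, hf⟩ => ?_⟩
  obtain ⟨⟨⟨r, hr⟩, hchain⟩, hbr, -⟩ := hX
  have : Nonempty (PartialGrading f) := ⟨PartialGrading.ofRoot hf hr⟩
  obtain ⟨P, hP⟩ := zorn_le_nonempty (PartialGrading.bddAbove_of_isChain (f := f))
  have hdom : P.dom = univ := eq_univ_of_forall fun x => by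
    obtain ⟨p, hp, hK⟩ := exists_strictMonoOn_Iic_ordConnected hbr (hchain x)
    obtain ⟨Q, hPQ, hxQ⟩ := P.exists_le_mem_dom hf hr (hchain x) hp hK
    exact (hP hPQ).1 hxQ
  exact ⟨P.toFun, (hdom ▸ P.isContinuousGradingOn).isContinuousGrading hchain⟩
end

section
/- Every branchwise-real tree admits a rank function, i.e. there exist an ordinal γ and an order-preserving function ρ : X → γ such that for every branch B the set {ρ(x) : x ∈ B} is downwards-closed, the preimage of any ordinal which is 0 or a limit is an antichain, and the preimage of any successor ordinal is a disjoint union of pairwise incomparable rays. -/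
/-!
Build an increasing transfinite sequence of lower sets `stage α`. At `0` and at limits one adds
the minimal elements of the complement of the union of the earlier stages; at a successor one
chooses, in every connected component of the complement of the current stage, a branch and adds
its part outside the stage. The rank of `x` is the first `α` with `x ∈ stage α`.

Fibres at `0` and at limits then consist of minimal elements, hence are antichains, and the fibre
at a successor is the union of the chosen rays, which lie in different components and so are
pairwise incomparable. The ranks below `x` form an initial segment because of the real structure
of the branches: since branches are real intervals with a common root, a nonempty bounded-above
set has an infimum, and for a limit `α ≤ rank x` the infimum of `{y ≤ x | α ≤ rank y}` has rank
exactly `α`.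
-/

open Order

universe u

variable {X : Type} [PartialOrder X]

namespace IsTreeOrder

theorem total_of_le (hT : IsTreeOrder X) {a b c : X} (hac : a ≤ c) (hbc : b ≤ c) :
    a ≤ b ∨ b ≤ a :=
  (hT.2 c).total hac hbc

theorem isLowerSet_of_isBranch (hT : IsTreeOrder X) {B : Set X} (hB : IsBranch B) :
    IsLowerSet B := by
  intro x y hyx hx
  have hchain : IsChain (· ≤ ·) (insert y B) := hB.1.insert fun b hb _ =>
    (hB.1.total hb hx).elim (hT.total_of_le hyx) fun hxb => Or.inl (hyx.trans hxb)
  exact hB.2 hchain (Set.subset_insert y B) ▸ Set.mem_insert y B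

end IsTreeOrder

theorem exists_isBranch_mem (x : X) : ∃ B : Set X, IsBranch B ∧ x ∈ B :=
  let ⟨B, hB, hxB⟩ := (Set.subsingleton_singleton (a := x)).isChain.exists_maxChain
  ⟨B, hB, hxB rfl⟩

noncomputable def branchThrough (x : X) : Set X := (exists_isBranch_mem x).choose

theorem isBranch_branchThrough (x : X) : IsBranch (branchThrough x) :=
  (exists_isBranch_mem x).choose_spec.1

theorem mem_branchThrough (x : X) : x ∈ branchThrough x :=
  (exists_isBranch_mem x).choose_spec.2

theorem OrderIso.exists_isGLB {B C : Type*} [Preorder B] [ConditionallyCompleteLattice C]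
    (e : B ≃o C) {S : Set B} (hne : S.Nonempty) (hbdd : BddBelow S) : ∃ m, IsGLB S m :=
  ⟨e.symm (sInf (e '' S)),
    e.isGLB_image.mp (isGLB_csInf (hne.image e) (e.monotone.map_bddBelow hbdd))⟩

theorem IsBranchwiseReal.exists_isGLB (hX : IsBranchwiseReal X) {S : Set X} (hne : S.Nonempty)
    (hbdd : BddAbove S) : ∃ m, IsGLB S m := by
  have hT := hX.1
  obtain ⟨r, hr⟩ := hT.1
  obtain ⟨x, hx⟩ := hbdd
  obtain ⟨s₀, hs₀⟩ := hne
  set B := branchThrough x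
  have hBlow : IsLowerSet B := hT.isLowerSet_of_isBranch (isBranch_branchThrough x)
  have hSB : ∀ s ∈ S, s ∈ B := fun s hs => hBlow (hx hs) (mem_branchThrough x)
  obtain ⟨I, hI, ⟨e⟩⟩ := hX.2.1 B (isBranch_branchThrough x)
  have : I.OrdConnected := hI
  have : Inhabited I := ⟨e ⟨x, mem_branchThrough x⟩⟩
  obtain ⟨m, hm⟩ := e.exists_isGLB (S := Subtype.val ⁻¹' S) ⟨⟨s₀, hSB s₀ hs₀⟩, hs₀⟩
    ⟨⟨r, hBlow (hr x) (mem_branchThrough x)⟩, fun b _ => hr b⟩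
  refine ⟨m, fun s hs => hm.1 (show (⟨s, hSB s hs⟩ : B) ∈ Subtype.val ⁻¹' S from hs),
    fun u hu => ?_⟩
  have huB : u ∈ B := hBlow ((hu hs₀).trans (hx hs₀)) (mem_branchThrough x)
  exact hm.2 (show (⟨u, huB⟩ : B) ∈ lowerBounds _ from fun b hb => hu hb)

/-- `a` and `b` lie in the same connected component of the complement of the lower set `D`. -/
def SameComponent (D : Set X) (a b : X) : Prop := ∃ w ∉ D, w ≤ a ∧ w ≤ b

namespace SameComponent

variable {D : Set X} {a b c : X}

theorem of_le (ha : a ∉ D) (hab : a ≤ b) : SameComponent D a b := ⟨a, ha, le_rfl, hab⟩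

theorem symm (h : SameComponent D a b) : SameComponent D b a :=
  let ⟨w, hw, hwa, hwb⟩ := h
  ⟨w, hw, hwb, hwa⟩

theorem trans (hT : IsTreeOrder X) (hab : SameComponent D a b) (hbc : SameComponent D b c) :
    SameComponent D a c := by
  obtain ⟨v, hv, hva, hvb⟩ := hab
  obtain ⟨w, hw, hwb, hwc⟩ := hbc
  rcases hT.total_of_le hvb hwb with hvw | hwv
  · exact ⟨v, hv, hva, hvw.trans hwc⟩
  · exact ⟨w, hw, hwv.trans hva, hwc⟩

end SameComponent

/-- Chosen by `epsilon` from the whole component of `y`, so it is the same for all `y` in one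
component (`componentRep_eq`). -/
noncomputable def componentRep (D : Set X) (y : X) : X :=
  @Classical.epsilon X ⟨y⟩ (SameComponent D · y)

theorem sameComponent_componentRep {D : Set X} {y : X} (hy : y ∉ D) :
    SameComponent D (componentRep D y) y :=
  Classical.epsilon_spec (p := (SameComponent D · y)) ⟨y, SameComponent.of_le hy le_rfl⟩

theorem componentRep_eq (hT : IsTreeOrder X) {D : Set X} {y y' : X}
    (h : SameComponent D y y') : componentRep D y = componentRep D y' := by
  unfold componentRep
  congr 1
  funext z
  exact propext ⟨fun hz => hz.trans hT h, fun hz => hz.trans hT h.symm⟩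

def componentRay (D : Set X) (y : X) : Set X := branchThrough (componentRep D y) \ D

theorem isRay_componentRay {D : Set X} (hD : IsLowerSet D) (y : X) :
    IsRay (componentRay D y) :=
  ⟨_, isBranch_branchThrough _, Set.sdiff_subset,
    fun _ ha _ hb hab => ⟨hb, fun hbD => ha.2 (hD hab hbD)⟩⟩

theorem sameComponent_of_mem_componentRay (hT : IsTreeOrder X) {D : Set X} {y a : X} (hy : y ∉ D)
    (ha : a ∈ componentRay D y) : SameComponent D y a := by
  obtain ⟨w, hw, hwp, hwy⟩ := sameComponent_componentRep hy
  rcases (isBranch_branchThrough _).1.total (mem_branchThrough _) ha.1 with hpa | hap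
  · exact ⟨w, hw, hwy, hwp.trans hpa⟩
  · exact (sameComponent_componentRep hy).symm.trans hT (SameComponent.of_le ha.2 hap).symm

theorem componentRay_eq_of_le (hT : IsTreeOrder X) {D : Set X} {y y' a b : X} (hy : y ∉ D)
    (hy' : y' ∉ D) (ha : a ∈ componentRay D y) (hb : b ∈ componentRay D y') (hab : a ≤ b) :
    componentRay D y = componentRay D y' := by
  have h : SameComponent D y y' :=
    ((sameComponent_of_mem_componentRay hT hy ha).trans hT (.of_le ha.2 hab)).trans hT
      (sameComponent_of_mem_componentRay hT hy' hb).symm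
  rw [componentRay, componentRay, componentRep_eq hT h]

def extendStage (D : Set X) : Set X := D ∪ ⋃ (y) (_ : y ∉ D), componentRay D y

def limitStage (U : Set X) : Set X := U ∪ {x | Minimal (· ∉ U) x}

theorem IsLowerSet.extendStage (hT : IsTreeOrder X) {D : Set X} (hD : IsLowerSet D) :
    IsLowerSet (extendStage D) := by
  rintro b a hab (hb | hb)
  · exact Or.inl (hD hab hb)
  · by_cases ha : a ∈ D
    · exact Or.inl ha
    obtain ⟨y, hy, hbR⟩ := Set.mem_iUnion₂.mp hb
    exact Or.inr (Set.mem_iUnion₂.mpr ⟨y, hy,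
      hT.isLowerSet_of_isBranch (isBranch_branchThrough _) hab hbR.1, ha⟩)

theorem IsLowerSet.limitStage {U : Set X} (hU : IsLowerSet U) : IsLowerSet (limitStage U) := by
  rintro b a hab (hb | hb)
  · exact Or.inl (hU hab hb)
  · by_cases ha : a ∈ U
    · exact Or.inl ha
    · exact Or.inr ((Minimal.eq_of_le (P := (· ∉ U)) hb ha hab).symm ▸ hb)

theorem extendStage_diff (D : Set X) :
    extendStage D \ D = ⋃ (y) (_ : y ∉ D), componentRay D y :=
  Set.union_sdiff_left.trans (sdiff_eq_left.mpr (Set.disjoint_left.mpr fun _ hx =>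
    let ⟨_, _, hxR⟩ := Set.mem_iUnion₂.mp hx; hxR.2))

theorem limitStage_diff (U : Set X) : limitStage U \ U = {x | Minimal (· ∉ U) x} :=
  Set.union_sdiff_left.trans (sdiff_eq_left.mpr (Set.disjoint_left.mpr fun _ hx => hx.1))

variable (X) in
noncomputable def stage (α : Ordinal) : Set X :=
  SuccOrder.prelimitRecOn α (fun _ _ D => extendStage D)
    fun β _ D => limitStage (⋃ (γ) (h : γ < β), D γ h)

theorem stage_succ (α : Ordinal) : stage X (succ α) = extendStage (stage X α) :=
  SuccOrder.prelimitRecOn_succ _ _ α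

theorem stage_of_isSuccPrelimit {α : Ordinal} (hα : IsSuccPrelimit α) :
    stage X α = limitStage (⋃ (β) (_ : β < α), stage X β) :=
  SuccOrder.prelimitRecOn_of_isSuccPrelimit _ _ hα

theorem stage_mono : Monotone (stage X) := by
  intro β α hβα
  induction α using SuccOrder.prelimitRecOn with
  | succ α _ ih =>
    rcases hβα.lt_or_eq with h | rfl
    · exact (ih (lt_succ_iff.mp h)).trans (stage_succ (X := X) α ▸ Set.subset_union_left)
    · rfl
  | isSuccPrelimit α hα _ =>
    rcases hβα.lt_or_eq with h | rfl
    · rw [stage_of_isSuccPrelimit hα]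
      exact (Set.subset_biUnion_of_mem (u := stage X) h).trans Set.subset_union_left
    · rfl

theorem isLowerSet_stage (hT : IsTreeOrder X) (α : Ordinal) : IsLowerSet (stage X α) := by
  induction α using SuccOrder.prelimitRecOn with
  | succ α _ ih => exact stage_succ (X := X) α ▸ ih.extendStage hT
  | isSuccPrelimit α hα ih =>
    exact stage_of_isSuccPrelimit (X := X) hα ▸ (isLowerSet_iUnion₂ ih).limitStage

theorem stage_ssubset_succ (hT : IsTreeOrder X) {x : X} {α : Ordinal} (hx : x ∉ stage X α) :
    stage X α ⊂ stage X (succ α) := by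
  obtain ⟨w, hw, hwp, -⟩ := sameComponent_componentRep hx
  have hp : componentRep (stage X α) x ∉ stage X α := fun hp => hw (isLowerSet_stage hT α hwp hp)
  rw [stage_succ, extendStage, Set.ssubset_iff_of_subset Set.subset_union_left]
  exact ⟨_, Or.inr (Set.mem_iUnion₂.mpr ⟨x, hx, mem_branchThrough _, hp⟩), hp⟩

theorem exists_mem_stage (hT : IsTreeOrder X) (x : X) : ∃ α : Ordinal.{u}, x ∈ stage X α := by
  by_contra! hx
  refine not_injective_of_ordinal (stage X : Ordinal.{u} → Set X)
    (StrictMono.injective fun β α h => ?_)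
  exact (stage_ssubset_succ hT (hx β)).trans_le (stage_mono (succ_le_of_lt h))

noncomputable def rank (x : X) : Ordinal.{u} := sInf {α | x ∈ stage X α}

section rank

variable (hT : IsTreeOrder X) {x : X} {α β : Ordinal.{u}}
include hT

theorem mem_stage_rank (x : X) : x ∈ stage X (rank x) := csInf_mem (exists_mem_stage hT x)

theorem rank_le_iff : rank x ≤ α ↔ x ∈ stage X α :=
  ⟨fun h => stage_mono h (mem_stage_rank hT x), fun h => csInf_le' h⟩

theorem notMem_stage_iff : x ∉ stage X α ↔ α < rank x :=
  (rank_le_iff hT).not.symm.trans not_le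

theorem rank_mono : Monotone (rank : X → Ordinal.{u}) := fun _ b hab =>
  (rank_le_iff hT).2 (isLowerSet_stage hT _ hab (mem_stage_rank hT b))

theorem rank_eq_succ_iff : rank x = succ β ↔ x ∈ stage X (succ β) \ stage X β := by
  rw [Set.mem_sdiff, ← rank_le_iff hT, ← rank_le_iff hT, not_le, ← succ_le_iff, le_antisymm_iff]

theorem rank_preimage_succ :
    rank ⁻¹' {succ β} = ⋃₀ (componentRay (stage X β) '' (stage X β)ᶜ) := by
  ext x
  rw [Set.mem_preimage, Set.mem_singleton_iff, rank_eq_succ_iff hT, stage_succ, extendStage_diff,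
    Set.sUnion_image]
  rfl

theorem exists_rank_eq_succ (hx : x ∉ stage X β) : ∃ w ≤ x, rank w = succ β := by
  obtain ⟨w, hw, hwp, hwx⟩ := sameComponent_componentRep hx
  refine ⟨w, hwx, (rank_eq_succ_iff hT).2 ?_⟩
  rw [stage_succ, extendStage_diff]
  exact Set.mem_iUnion₂.mpr ⟨x, hx,
    hT.isLowerSet_of_isBranch (isBranch_branchThrough _) hwp (mem_branchThrough _), hw⟩

theorem mem_iUnion_stage_iff : x ∈ ⋃ (γ) (_ : γ < α), stage X γ ↔ rank x < α := by
  simp only [Set.mem_iUnion₂, exists_prop, ← rank_le_iff hT]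
  exact ⟨fun ⟨γ, hγ, hx⟩ => hx.trans_lt hγ, fun hx => ⟨rank x, hx, le_rfl⟩⟩

theorem rank_eq_iff_minimal (hα : IsSuccPrelimit α) : rank x = α ↔ Minimal (α ≤ rank ·) x := by
  set U := ⋃ (γ) (_ : γ < α), stage X γ
  have hU : ∀ y : X, y ∉ U ↔ α ≤ rank y := fun _ => (mem_iUnion_stage_iff hT).not.trans not_lt
  calc rank x = α ↔ x ∈ limitStage U \ U := by
        have hstage : stage X α = limitStage U := stage_of_isSuccPrelimit hα
        rw [Set.mem_sdiff, hU, ← hstage, ← rank_le_iff hT, le_antisymm_iff]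
    _ ↔ Minimal (α ≤ rank ·) x := by simp only [limitStage_diff, Set.mem_ofPred_eq, ← hU]

theorem isAntichain_rank_preimage (hα : IsSuccPrelimit α) :
    IsAntichain (· ≤ ·) (rank ⁻¹' {α} : Set X) := by
  convert setOfPred_minimal_antichain (α ≤ rank ·) using 1
  ext x
  exact rank_eq_iff_minimal hT hα

end rank

namespace IsBranchwiseReal

variable (hX : IsBranchwiseReal X) {x : X} {α : Ordinal.{u}}
include hX

theorem exists_rank_eq_of_isSuccPrelimit (hα : IsSuccPrelimit α) (hx : α ≤ rank x) :
    ∃ y ≤ x, rank y = α := by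
  have hT := hX.1
  obtain ⟨m, hm⟩ := hX.exists_isGLB (S := {y | y ≤ x ∧ α ≤ rank y}) ⟨x, le_rfl, hx⟩
    ⟨x, fun _ hy => hy.1⟩
  have hmx : m ≤ x := hm.1 ⟨le_rfl, hx⟩
  refine ⟨m, hmx, (rank_eq_iff_minimal hT hα).2 ⟨?_, fun z hz hzm => hm.1 ⟨hzm.trans hmx, hz⟩⟩⟩
  by_contra! hmα
  obtain ⟨w, hwx, hw⟩ := exists_rank_eq_succ hT ((notMem_stage_iff hT).2 (hmα.trans_le hx))
  have hwα : rank w < α := hw ▸ hα.succ_lt hmα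
  -- everything of rank at least `α` below `x` lies above `w`, so `w ≤ m`
  have hwm : w ≤ m := hm.2 fun s hs => (hT.total_of_le hwx hs.1).resolve_right fun hsw =>
    ((rank_mono hT hsw).trans_lt hwα).not_ge hs.2
  exact (rank_mono hT hwm).not_gt (hw ▸ lt_succ _)

theorem exists_rank_eq_of_le (hαx : α ≤ rank x) : ∃ y ≤ x, rank y = α := by
  by_cases hα : IsSuccPrelimit α
  · exact hX.exists_rank_eq_of_isSuccPrelimit hα hαx
  obtain ⟨β, -, rfl⟩ := not_isSuccPrelimit_iff_succ_eq.mp hα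
  exact exists_rank_eq_succ hX.1 ((notMem_stage_iff hX.1).2 (succ_le_iff.mp hαx))

end IsBranchwiseReal

/-- Every branchwise-real tree admits a rank function into some ordinal `γ`. -/
theorem stmt_4 (X : Type) [PartialOrder X] (hX : IsBranchwiseReal X) :
    ∃ (γ : Ordinal) (ρ : X → Ordinal), (∀ x : X, ρ x < γ) ∧ IsRankFunction ρ := by
  have hT := hX.1
  refine ⟨⨆ x, succ (rank x), rank,
    fun x => (lt_succ _).trans_le (le_ciSup Ordinal.bddAbove_of_small x), rank_mono hT, ?_, ?_, ?_⟩
  · rintro B hB α β hβα ⟨x, hxB, rfl⟩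
    obtain ⟨y, hyx, rfl⟩ := hX.exists_rank_eq_of_le hβα
    exact ⟨y, hT.isLowerSet_of_isBranch hB hyx hxB, rfl⟩
  · rintro α (rfl | hα)
    · exact isAntichain_rank_preimage hT Ordinal.isSuccPrelimit_zero
    · exact isAntichain_rank_preimage hT hα.isSuccPrelimit
  · rintro α β rfl
    set D := stage X β
    refine ⟨componentRay D '' Dᶜ, by rw [← succ_eq_add_one, rank_preimage_succ hT], ?_, ?_⟩
    · rintro _ ⟨y, -, rfl⟩
      exact isRay_componentRay (isLowerSet_stage hT β) y
    · rintro _ ⟨y, hy, rfl⟩ _ ⟨y', hy', rfl⟩ hne a ha b hb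
      exact ⟨fun hab => hne (componentRay_eq_of_le hT hy hy' ha hb hab),
        fun hba => hne (componentRay_eq_of_le hT hy' hy hb ha hba).symm⟩
end

section
/- If a branchwise-real tree X admits a bounded rank function (a rank function ρ : X → ω₁ whose values have supremum strictly less than ω₁), then X is continuously gradable. -/
open Set

lemma StrictMono.ordConnected_image {α β : Type*} [LinearOrder α] [Preorder β] {f : α → β}
    (hf : StrictMono f) (hrange : (range f).OrdConnected) {s : Set α} (hs : s.OrdConnected) :
    (f '' s).OrdConnected := by
  refine ⟨?_⟩
  rintro _ ⟨a, ha, rfl⟩ _ ⟨b, hb, rfl⟩ _ ⟨hat, htb⟩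
  obtain ⟨c, rfl⟩ := hrange.out (mem_range_self a) (mem_range_self b) ⟨hat, htb⟩
  exact ⟨c, hs.out ha hb ⟨hf.le_iff_le.1 hat, hf.le_iff_le.1 htb⟩, rfl⟩

lemma StrictMonoOn.le_iff_le_of_isChain_s5 {α β : Type*} [PartialOrder α] [Preorder β] {f : α → β}
    {s : Set α} (hf : StrictMonoOn f s) (hs : IsChain (· ≤ ·) s) {a b : α} (ha : a ∈ s)
    (hb : b ∈ s) : f a ≤ f b ↔ a ≤ b := by
  refine ⟨fun hab => ?_, fun hab => hf.monotoneOn ha hb hab⟩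
  by_contra hba
  have hlt : b < a := lt_of_le_not_ge ((hs.total hb ha).resolve_right hba) hba
  exact (hf hb ha hlt).not_ge hab

lemma StrictMonoOn.lt_iff_lt_of_isChain {α β : Type*} [PartialOrder α] [Preorder β] {f : α → β}
    {s : Set α} (hf : StrictMonoOn f s) (hs : IsChain (· ≤ ·) s) {a b : α} (ha : a ∈ s)
    (hb : b ∈ s) : f a < f b ↔ a < b := by
  simp only [lt_iff_le_not_ge, hf.le_iff_le_of_isChain_s5 hs ha hb, hf.le_iff_le_of_isChain_s5 hs hb ha]

lemma exists_strictMonoOn_Iic_real {o : Ordinal} (ho : o < (Cardinal.aleph 1).ord) :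
    ∃ e : Ordinal → ℝ, StrictMonoOn e (Iic o) := by
  have hcount : Countable (Iic o) := by
    rw [← Cardinal.mk_le_aleph0_iff, ← Order.Iio_succ, Cardinal.mk_Iio_ordinal,
      Cardinal.lift_le_aleph0, ← Order.lt_succ_iff, Cardinal.succ_aleph0, ← Cardinal.lt_ord]
    exact (Cardinal.isSuccLimit_ord (Cardinal.aleph0_le_aleph 1)).succ_lt ho
  obtain ⟨f⟩ := Order.embedding_from_countable_to_dense (α := Iic o) (β := ℝ)
  refine ⟨fun α => if h : α ≤ o then f ⟨α, h⟩ else 0, fun α hα β hβ hαβ => ?_⟩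
  simp only [dif_pos (show α ≤ o from hα), dif_pos (show β ≤ o from hβ)]
  exact f.strictMono (Subtype.mk_lt_mk.2 hαβ)

lemma StrictMonoOn.lt_add_one_of_le {e : Ordinal → ℝ} {δ α : Ordinal}
    (he : StrictMonoOn e (Iic (δ + 1))) (hα : α ≤ δ) : e α < e (α + 1) :=
  he (hα.trans le_self_add) (add_le_add_left hα 1) (Order.lt_add_one_iff.2 le_rfl)

/-- How a successor ray `R` is laid out, `s` being the supremum of the grading below `R`. -/
def IsRayGrading {X : Type*} [Preorder X] (R : Set X) (s b : ℝ) (φ : X → ℝ) : Prop :=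
  StrictMonoOn φ R ∧ (φ '' R).OrdConnected ∧ φ '' R ⊆ Ico s b ∧ IsGLB (φ '' R) s

lemma Set.OrdConnected.exists_isRayGrading {I : Set ℝ} (hI : I.OrdConnected) (hne : I.Nonempty)
    {s b : ℝ} (hsb : s < b) : ∃ g : ℝ → ℝ, StrictMono g ∧ IsRayGrading I s b g := by
  set k : ℝ → ℝ := fun u => (orderIsoIooNegOneOne ℝ u : ℝ)
  have hk : StrictMono k := fun u v h => (orderIsoIooNegOneOne ℝ).strictMono h
  have hkrange : range k = Ioo (-1) 1 := by
    rw [range_comp' Subtype.val, (orderIsoIooNegOneOne ℝ).surjective.range_eq, image_univ,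
      Subtype.range_coe]
  set J := k '' I
  have hJ : J.OrdConnected := hk.ordConnected_image (hkrange ▸ ordConnected_Ioo) hI
  have hJsub : J ⊆ Ioo (-1) 1 := hkrange ▸ image_subset_range k I
  set i := sInf J
  have hi : IsGLB J i := Real.isGLB_sInf (hne.image k) ⟨-1, fun u hu => (hJsub hu).1.le⟩
  have hi1 : i < 1 := by
    obtain ⟨u, hu⟩ := hne.image k
    exact (hi.1 hu).trans_lt (hJsub hu).2
  have h1i : 0 < 1 - i := by linarith
  set c := (b - s) / (1 - i)
  have hc : 0 < c := div_pos (by linarith) h1i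
  have hcb : c * (1 - i) = b - s := div_mul_cancel₀ _ h1i.ne'
  -- the affine map sending `i` to `s` and `1` to `b`
  set a : ℝ ≃o ℝ :=
    ((OrderIso.addRight (-i)).trans (OrderIso.mulLeft₀ c hc)).trans (OrderIso.addLeft s)
  have ha : ∀ u, a u = s + c * (u - i) := fun u => by simp [a, sub_eq_add_neg]
  refine ⟨a ∘ k, a.strictMono.comp hk, (a.strictMono.comp hk).strictMonoOn _, ?_, ?_, ?_⟩
  · rw [image_comp]
    exact a.strictMono.ordConnected_image (a.surjective.range_eq ▸ ordConnected_univ) hJ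
  · rintro _ ⟨u, hu, rfl⟩
    have h1 : i ≤ k u := hi.1 (mem_image_of_mem k hu)
    have h2 : k u < 1 := (hJsub (mem_image_of_mem k hu)).2
    simp only [Function.comp_apply, ha, mem_Ico]
    constructor <;> nlinarith
  · rw [image_comp, show s = a i by simp [ha]]
    exact a.isGLB_image'.2 hi

section RayGrading

variable {X : Type*} [PartialOrder X] {R : Set X} {s b : ℝ}

noncomputable def rayGrading (R : Set X) (s b : ℝ) : X → ℝ :=
  Classical.epsilon (IsRayGrading R s b)

lemma exists_isRayGrading {ψ : X → ℝ} (hψ : StrictMonoOn ψ R) (hψR : (ψ '' R).OrdConnected)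
    (hne : R.Nonempty) (hsb : s < b) : ∃ φ, IsRayGrading R s b φ := by
  obtain ⟨g, hg, -, hgc, hgs, hgi⟩ := hψR.exists_isRayGrading (hne.image ψ) hsb
  refine ⟨g ∘ ψ, hg.comp_strictMonoOn hψ, ?_⟩
  rw [image_comp]
  exact ⟨hgc, hgs, hgi⟩

lemma isRayGrading_rayGrading (h : ∃ φ, IsRayGrading R s b φ) :
    IsRayGrading R s b (rayGrading R s b) :=
  Classical.epsilon_spec h

lemma IsRayGrading.congr {φ φ' : X → ℝ} (h : IsRayGrading R s b φ) (heq : EqOn φ φ' R) :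
    IsRayGrading R s b φ' := by
  obtain ⟨hm, hrest⟩ := h
  exact ⟨hm.congr heq, heq.image_eq ▸ hrest⟩

lemma IsRayGrading.eq_of_isLeast {φ : X → ℝ} (h : IsRayGrading R s b φ) {m : X}
    (hm : IsLeast R m) : φ m = s :=
  (h.1.monotoneOn.map_isLeast hm).isGLB.unique h.2.2.2

end RayGrading

lemma exists_strictMonoOn_image_eq {X : Type*} [Preorder X] {B : Set X} {I : Set ℝ}
    (g : B ≃o I) : ∃ ψ : X → ℝ, StrictMonoOn ψ B ∧ ψ '' B = I := by
  classical
  refine ⟨fun x => if h : x ∈ B then g ⟨x, h⟩ else 0, fun a ha b hb hab => ?_, ?_⟩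
  · simp only [dif_pos ha, dif_pos hb]
    exact g.strictMono (Subtype.mk_lt_mk.2 hab)
  · ext t
    constructor
    · rintro ⟨a, ha, rfl⟩
      simp [dif_pos ha]
    · intro ht
      exact ⟨g.symm ⟨t, ht⟩, (g.symm ⟨t, ht⟩).2, by simp⟩

section Tree

variable {X : Type} [PartialOrder X]

lemma IsBranch.mem_of_le (htree : ∀ x : X, IsChain (· ≤ ·) {y | y ≤ x}) {B : Set X}
    (hB : IsBranch B) {x w : X} (hx : x ∈ B) (hwx : w ≤ x) : w ∈ B := by
  have hchain : IsChain (· ≤ ·) (insert w B) := hB.1.insert fun b hb _ =>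
    (hB.1.total hb hx).elim (fun hbx => (htree x).total hwx hbx) fun hxb => Or.inl (hwx.trans hxb)
  rw [hB.2 hchain (subset_insert w B)]
  exact mem_insert w B

lemma exists_branch_Iic_subset (htree : ∀ x : X, IsChain (· ≤ ·) {y | y ≤ x}) (y : X) :
    ∃ B : Set X, IsBranch B ∧ Iic y ⊆ B := by
  obtain ⟨B, hB, hyB⟩ := (subsingleton_singleton (a := y)).isChain.exists_maxChain
  exact ⟨B, hB, fun w hw => IsBranch.mem_of_le htree hB (hyB rfl) hw⟩

lemma IsRay.isChain {R : Set X} (hR : IsRay R) : IsChain (· ≤ ·) R :=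
  let ⟨_, hB, hRB, _⟩ := hR
  hB.1.mono hRB

lemma denselyOrdered_of_branch (htree : ∀ x : X, IsChain (· ≤ ·) {y | y ≤ x})
    (hbranch : ∀ B : Set X, IsBranch B → ∃ ψ : X → ℝ, StrictMonoOn ψ B ∧ (ψ '' B).OrdConnected) :
    DenselyOrdered X := by
  refine ⟨fun x y hxy => ?_⟩
  obtain ⟨B, hB, hyB⟩ := exists_branch_Iic_subset htree y
  obtain ⟨ψ, hψ, hψB⟩ := hbranch B hB
  have hx : x ∈ B := hyB hxy.le
  have hy : y ∈ B := hyB le_rfl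
  obtain ⟨t, hxt, hty⟩ := exists_between (hψ hx hy hxy)
  obtain ⟨z, hz, rfl⟩ :=
    hψB.out (mem_image_of_mem ψ hx) (mem_image_of_mem ψ hy) ⟨hxt.le, hty.le⟩
  exact ⟨z, (hψ.lt_iff_lt_of_isChain hB.1 hx hz).1 hxt, (hψ.lt_iff_lt_of_isChain hB.1 hz hy).1 hty⟩

lemma exists_isLeast_Icc_inter_upperBounds (htree : ∀ x : X, IsChain (· ≤ ·) {y | y ≤ x})
    (hbranch : ∀ B : Set X, IsBranch B → ∃ ψ : X → ℝ, StrictMonoOn ψ B ∧ (ψ '' B).OrdConnected)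
    {x y : X} {S : Set X} (hS : S ⊆ Icc x y) (hne : S.Nonempty) :
    ∃ z, IsLeast (Icc x y ∩ upperBounds S) z := by
  obtain ⟨B, hB, hyB⟩ := exists_branch_Iic_subset htree y
  obtain ⟨ψ, hψ, hψB⟩ := hbranch B hB
  have hSB : S ⊆ B := fun w hw => hyB (hS hw).2
  have hle : ∀ {u v}, u ∈ B → v ∈ B → (ψ u ≤ ψ v ↔ u ≤ v) :=
    fun hu hv => hψ.le_iff_le_of_isChain_s5 hB.1 hu hv
  have hy : y ∈ B := hyB le_rfl
  have hbdd : BddAbove (ψ '' S) := ⟨ψ y, by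
    rintro _ ⟨w, hw, rfl⟩
    exact (hle (hSB hw) hy).2 (hS hw).2⟩
  obtain ⟨s₀, hs₀⟩ := hne
  have hs₀c : ψ s₀ ≤ sSup (ψ '' S) := le_csSup hbdd (mem_image_of_mem ψ hs₀)
  have hcy : sSup (ψ '' S) ≤ ψ y := csSup_le ⟨_, mem_image_of_mem ψ hs₀⟩ (by
    rintro _ ⟨w, hw, rfl⟩
    exact (hle (hSB hw) hy).2 (hS hw).2)
  obtain ⟨z, hzB, hzc⟩ :=
    hψB.out (mem_image_of_mem ψ (hSB hs₀)) (mem_image_of_mem ψ hy) ⟨hs₀c, hcy⟩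
  refine ⟨z, ⟨⟨(hS hs₀).1.trans ((hle (hSB hs₀) hzB).1 (hzc ▸ hs₀c)),
    (hle hzB hy).1 (hzc ▸ hcy)⟩, fun w hw => (hle (hSB hw) hzB).1
      (hzc ▸ le_csSup hbdd (mem_image_of_mem ψ hw))⟩, fun u ⟨hu, hub⟩ => ?_⟩
  refine (hle hzB (hyB hu.2)).1 (hzc ▸ csSup_le ⟨_, mem_image_of_mem ψ hs₀⟩ ?_)
  rintro _ ⟨w, hw, rfl⟩
  exact (hle (hSB hw) (hyB hu.2)).2 (hub hw)

lemma IsRay.exists_strictMonoOn {R : Set X} (hR : IsRay R)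
    (hbranch : ∀ B : Set X, IsBranch B → ∃ ψ : X → ℝ, StrictMonoOn ψ B ∧ (ψ '' B).OrdConnected) :
    ∃ ψ : X → ℝ, StrictMonoOn ψ R ∧ (ψ '' R).OrdConnected := by
  obtain ⟨B, hB, hRB, hfin⟩ := hR
  obtain ⟨ψ, hψ, hψB⟩ := hbranch B hB
  refine ⟨ψ, hψ.mono hRB, ⟨?_⟩⟩
  rintro _ ⟨a, ha, rfl⟩ _ ⟨b, hb, rfl⟩ t ht
  obtain ⟨c, hc, rfl⟩ := hψB.out (mem_image_of_mem ψ (hRB ha)) (mem_image_of_mem ψ (hRB hb)) ht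
  exact ⟨c, hfin a ha c hc ((hψ.le_iff_le_of_isChain_s5 hB.1 (hRB ha) hc).1 ht.1), rfl⟩

end Tree

section RankFunction

variable {X : Type} [PartialOrder X] {ρ : X → Ordinal}

lemma IsRankFunction.exists_rank_eq (hρ : IsRankFunction ρ) {C : Set X}
    (hC : IsChain (· ≤ ·) C) {c : X} (hc : c ∈ C) {α : Ordinal} (hα : α ≤ ρ c) :
    ∃ w, ρ w = α ∧ ∀ c' ∈ C, w ≤ c' ∨ c' ≤ w := by
  obtain ⟨B, hB, hCB⟩ := hC.exists_maxChain
  obtain ⟨w, hwB, rfl⟩ := hρ.2.1 B hB (ρ c) α hα ⟨c, hCB hc, rfl⟩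
  exact ⟨w, rfl, fun c' hc' => hB.1.total hwB (hCB hc')⟩

lemma IsRankFunction.exists_lt_rank_eq (hρ : IsRankFunction ρ) {y : X} {α : Ordinal}
    (hα : α < ρ y) : ∃ w < y, ρ w = α := by
  obtain ⟨w, rfl, hw⟩ :=
    hρ.exists_rank_eq subsingleton_singleton.isChain (mem_singleton y) hα.le
  have hyw : ¬y ≤ w := fun h => (hρ.1 h).not_gt hα
  exact ⟨w, lt_of_le_not_ge ((hw y rfl).resolve_right hyw) hyw, rfl⟩

lemma IsRankFunction.exists_between_rank_eq (hρ : IsRankFunction ρ) {x y : X} (hxy : x ≤ y)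
    {α : Ordinal} (hxα : ρ x < α) (hαy : α < ρ y) : ∃ w, x < w ∧ w < y ∧ ρ w = α := by
  obtain ⟨w, rfl, hw⟩ := hρ.exists_rank_eq (IsChain.pair hxy) (mem_insert_of_mem x rfl) hαy.le
  have hwx : ¬w ≤ x := fun h => (hρ.1 h).not_gt hxα
  have hyw : ¬y ≤ w := fun h => (hρ.1 h).not_gt hαy
  exact ⟨w, lt_of_le_not_ge ((hw x (mem_insert x _)).resolve_left hwx) hwx,
    lt_of_le_not_ge ((hw y (mem_insert_of_mem x rfl)).resolve_right hyw) hyw, rfl⟩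

lemma IsRankFunction.rank_lt_of_lt (hρ : IsRankFunction ρ) {x y : X}
    (hy : ρ y = 0 ∨ Order.IsSuccLimit (ρ y)) (hxy : x < y) : ρ x < ρ y :=
  (hρ.1 hxy.le).lt_of_ne fun h => hρ.2.2.1 _ hy h rfl hxy.ne hxy.le

/-- The points of the same rank as `x` comparable with `x`: when `ρ x` is a successor, the ray
of the fibre through `x`. -/
def rayOf (ρ : X → Ordinal) (x : X) : Set X :=
  {z | ρ z = ρ x ∧ (z ≤ x ∨ x ≤ z)}

def below (ρ : X → Ordinal) (x : X) : Set X :=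
  {w | w < x ∧ ρ w < ρ x}

lemma mem_rayOf_self (x : X) : x ∈ rayOf ρ x :=
  ⟨rfl, Or.inl le_rfl⟩

lemma IsRankFunction.exists_isRay_forall_rayOf_eq (hρ : IsRankFunction ρ) {x : X} {β : Ordinal}
    (hx : ρ x = β + 1) : ∃ R, x ∈ R ∧ IsRay R ∧ ∀ u ∈ R, rayOf ρ u = R := by
  obtain ⟨𝒮, hfib, hray, hdisj⟩ := hρ.2.2.2 _ β hx
  have hfib' : ∀ {u}, ρ u = ρ x ↔ u ∈ ⋃₀ 𝒮 := fun {u} => by rw [← hfib]; rfl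
  obtain ⟨R, hR𝒮, hxR⟩ := hfib'.1 rfl
  refine ⟨R, hxR, hray R hR𝒮, fun u hu => ?_⟩
  have hrank : ∀ v ∈ R, ρ v = ρ x := fun v hv => hfib'.2 ⟨R, hR𝒮, hv⟩
  ext z
  refine ⟨fun ⟨hz, hzu⟩ => ?_, fun hz =>
    ⟨(hrank z hz).trans (hrank u hu).symm, (hray R hR𝒮).isChain.total hz hu⟩⟩
  obtain ⟨R', hR'𝒮, hzR'⟩ := hfib'.1 (hz.trans (hrank u hu))
  by_contra hzR
  obtain ⟨h1, h2⟩ := hdisj R' hR'𝒮 R hR𝒮 (fun h => hzR (h ▸ hzR')) z hzR' u hu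
  exact hzu.elim h1 h2

lemma IsRankFunction.isRay_rayOf (hρ : IsRankFunction ρ) {x : X} {β : Ordinal}
    (hx : ρ x = β + 1) : IsRay (rayOf ρ x) := by
  obtain ⟨R, hxR, hR, hrayOf⟩ := hρ.exists_isRay_forall_rayOf_eq hx
  exact hrayOf x hxR ▸ hR

lemma IsRankFunction.rayOf_eq_of_mem (hρ : IsRankFunction ρ) {x z : X} {β : Ordinal}
    (hx : ρ x = β + 1) (hz : z ∈ rayOf ρ x) : rayOf ρ z = rayOf ρ x := by
  obtain ⟨R, hxR, -, hrayOf⟩ := hρ.exists_isRay_forall_rayOf_eq hx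
  rw [hrayOf x hxR] at hz ⊢
  exact hrayOf z hz

lemma IsRankFunction.below_nonempty (hρ : IsRankFunction ρ) {y : X} (hy : ρ y ≠ 0) :
    (below ρ y).Nonempty :=
  let ⟨w, hwy, hw⟩ := hρ.exists_lt_rank_eq (pos_iff_ne_zero.2 hy)
  ⟨w, hwy, hw ▸ pos_iff_ne_zero.2 hy⟩

lemma mem_rayOf_or_mem_below (hmono : Monotone ρ) {x y : X} (hxy : x ≤ y) :
    x ∈ rayOf ρ y ∨ x ∈ below ρ y :=
  (hmono hxy).eq_or_lt.imp (fun h => ⟨h, Or.inl hxy⟩) fun h =>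
    ⟨hxy.lt_of_ne fun hxy' => h.ne (hxy' ▸ rfl), h⟩

variable (htree : ∀ x : X, IsChain (· ≤ ·) {y | y ≤ x}) (hmono : Monotone ρ)
include htree hmono

lemma below_eq_of_le {y z : X} (hzy : z ≤ y) (hρzy : ρ z = ρ y) : below ρ z = below ρ y := by
  ext w
  refine ⟨fun ⟨hwz, hw⟩ => ⟨hwz.trans_le hzy, hρzy ▸ hw⟩, fun ⟨hwy, hw⟩ => ?_⟩
  have hzw : ¬z ≤ w := fun h => (hmono h).not_gt (hρzy ▸ hw)
  exact ⟨lt_of_le_not_ge (((htree y).total hwy.le hzy).resolve_right hzw) hzw, hρzy ▸ hw⟩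

lemma below_eq_of_mem_rayOf {y z : X} (hz : z ∈ rayOf ρ y) : below ρ z = below ρ y :=
  hz.2.elim (fun h => below_eq_of_le htree hmono h hz.1) fun h =>
    (below_eq_of_le htree hmono h hz.1.symm).symm

lemma lt_of_mem_below_of_mem_rayOf {y w r : X} (hw : w ∈ below ρ y) (hr : r ∈ rayOf ρ y) :
    w < r := by
  rcases hr.2 with hry | hyr
  · rw [← below_eq_of_le htree hmono hry hr.1] at hw
    exact hw.1
  · exact hw.1.trans_le hyr

end RankFunction

section Gluing

variable {X : Type} [PartialOrder X] {ℓ : X → ℝ}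

def GradedBelow (ℓ : X → ℝ) (y : X) : Prop :=
  ∀ x < y, ℓ x < ℓ y ∧ SurjOn ℓ (Icc x y) (Icc (ℓ x) (ℓ y))

lemma GradedBelow.le {y x : X} (h : GradedBelow ℓ y) (hxy : x ≤ y) : ℓ x ≤ ℓ y :=
  hxy.eq_or_lt.elim (fun h' => h' ▸ le_rfl) fun h' => (h x h').1.le

lemma exists_mem_Icc_eq_of_lt_sSup (htree : ∀ x : X, IsChain (· ≤ ·) {y | y ≤ x}) {S : Set X}
    {x y : X} {t : ℝ} (hS : ∀ w ∈ S, w < y ∧ GradedBelow ℓ w) (hx : x ∈ S) (hxt : ℓ x ≤ t)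
    (hts : t < sSup (ℓ '' S)) : ∃ z ∈ Icc x y, ℓ z = t := by
  obtain ⟨_, ⟨w, hw, rfl⟩, htw⟩ := exists_lt_of_lt_csSup ⟨_, mem_image_of_mem ℓ hx⟩ hts
  have hxw : x < w := by
    rcases (htree y).total (hS x hx).1.le (hS w hw).1.le with hxw | hwx
    · exact hxw.lt_of_ne fun h => (h ▸ htw).not_ge hxt
    · exact absurd (((hS x hx).2.le hwx).trans hxt) htw.not_ge
  obtain ⟨z, hz, rfl⟩ := ((hS w hw).2 x hxw).2 ⟨hxt, htw.le⟩
  exact ⟨z, ⟨hz.1, hz.2.trans (hS w hw).1.le⟩, rfl⟩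

variable {ρ : X → Ordinal} (hmono : Monotone ρ) {y : X} {b : ℝ}
  (hD : ∀ w ∈ below ρ y, GradedBelow ℓ w) (hbdd : BddAbove (ℓ '' below ρ y))
  (hR : IsRayGrading (rayOf ρ y) (sSup (ℓ '' below ρ y)) b ℓ)
include hmono hD hbdd hR

lemma lt_of_isRayGrading [DenselyOrdered X] {x : X} (hxy : x < y) : ℓ x < ℓ y := by
  have hyR := mem_rayOf_self (ρ := ρ) y
  rcases mem_rayOf_or_mem_below hmono hxy.le with hxR | hxD
  · exact hR.1 hxR hyR hxy
  have hxs : ℓ x ≤ sSup (ℓ '' below ρ y) := le_csSup hbdd (mem_image_of_mem ℓ hxD)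
  have hsy : sSup (ℓ '' below ρ y) ≤ ℓ y := (hR.2.2.1 (mem_image_of_mem ℓ hyR)).1
  refine (hxs.trans hsy).lt_of_ne fun hxy' => ?_
  -- `x` would be the last point below the ray and `y` its first point
  obtain ⟨z, hxz, hzy⟩ := exists_between hxy
  rcases mem_rayOf_or_mem_below hmono hzy.le with hzR | hzD
  · have := hR.1 hzR hyR hzy
    have := (hR.2.2.1 (mem_image_of_mem ℓ hzR)).1
    linarith
  · have := (hD z hzD x hxz).1
    have := le_csSup hbdd (mem_image_of_mem ℓ hzD)
    linarith

variable (htree : ∀ x : X, IsChain (· ≤ ·) {y | y ≤ x})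
include htree

lemma exists_mem_Icc_eq_sSup_of_isRayGrading
    (hcompl : ∀ x y : X, ∀ S ⊆ Icc x y, S.Nonempty → ∃ z, IsLeast (Icc x y ∩ upperBounds S) z)
    {x : X} (hxD : x ∈ below ρ y) : ∃ z ∈ Icc x y, ℓ z = sSup (ℓ '' below ρ y) := by
  obtain ⟨z, ⟨hz, hzS⟩, hzleast⟩ :=
    hcompl x y (Icc x y ∩ below ρ y) inter_subset_left ⟨x, ⟨le_rfl, hxD.1.le⟩, hxD⟩
  refine ⟨z, hz, ?_⟩
  -- `z` is either the first point of the ray or the last point below it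
  rcases mem_rayOf_or_mem_below hmono hz.2 with hzR | hzD
  · refine hR.eq_of_isLeast ⟨hzR, fun r hr => hr.2.elim (fun hry => hzleast ⟨⟨?_, hry⟩, ?_⟩)
      fun hyr => hz.2.trans hyr⟩
    · exact (lt_of_mem_below_of_mem_rayOf htree hmono hxD hr).le
    · exact fun w hw => (lt_of_mem_below_of_mem_rayOf htree hmono hw.2 hr).le
  · refine le_antisymm (le_csSup hbdd (mem_image_of_mem ℓ hzD))
      (csSup_le ⟨_, mem_image_of_mem ℓ hxD⟩ ?_)
    rintro _ ⟨w, hwD, rfl⟩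
    refine (hD z hzD).le (((htree y).total hwD.1.le hz.2).elim id fun hzw => ?_)
    exact hzS ⟨⟨hz.1.trans hzw, hwD.1.le⟩, hwD⟩

lemma surjOn_of_isRayGrading (hRchain : IsChain (· ≤ ·) (rayOf ρ y))
    (hcompl : ∀ x y : X, ∀ S ⊆ Icc x y, S.Nonempty → ∃ z, IsLeast (Icc x y ∩ upperBounds S) z)
    {x : X} (hxy : x < y) : SurjOn ℓ (Icc x y) (Icc (ℓ x) (ℓ y)) := by
  rintro t ⟨hxt, hty⟩
  have hyR := mem_rayOf_self (ρ := ρ) y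
  set s := sSup (ℓ '' below ρ y)
  rcases hxt.eq_or_lt with rfl | hxt'
  · exact ⟨x, ⟨le_rfl, hxy.le⟩, rfl⟩
  rcases lt_or_ge s t with hst | hts
  · obtain ⟨_, ⟨r, hr, rfl⟩, -, hrt⟩ := hR.2.2.2.exists_between hst
    obtain ⟨z, hzR, rfl⟩ :=
      hR.2.1.out (mem_image_of_mem ℓ hr) (mem_image_of_mem ℓ hyR) ⟨hrt.le, hty⟩
    refine ⟨z, ⟨?_, (hR.1.le_iff_le_of_isChain_s5 hRchain hzR hyR).1 hty⟩, rfl⟩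
    rcases mem_rayOf_or_mem_below hmono hxy.le with hxR | hxD
    · exact (hR.1.le_iff_le_of_isChain_s5 hRchain hxR hzR).1 hxt
    · exact (lt_of_mem_below_of_mem_rayOf htree hmono hxD hzR).le
  have hxD : x ∈ below ρ y := (mem_rayOf_or_mem_below hmono hxy.le).resolve_left fun hxR =>
    (hR.2.2.1 (mem_image_of_mem ℓ hxR)).1.not_gt (hxt'.trans_le hts)
  rcases hts.eq_or_lt with rfl | hts'
  · exact exists_mem_Icc_eq_sSup_of_isRayGrading hmono hD hbdd hR htree hcompl hxD
  · exact exists_mem_Icc_eq_of_lt_sSup htree (fun w hw => ⟨hw.1, hD w hw⟩) hxD hxt hts'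

end Gluing

section Grading

variable {X : Type} [PartialOrder X] (ρ : X → Ordinal) (e : Ordinal → ℝ)

open Classical in
noncomputable def grading (x : X) : ℝ :=
  if ρ x = 0 then e 0
  else if Order.IsSuccLimit (ρ x) then sSup (range fun w : below ρ x => grading w)
  else rayGrading (rayOf ρ x) (sSup (range fun w : below ρ x => grading w)) (e (ρ x + 1)) x
termination_by ρ x
decreasing_by all_goals exact w.2.2

variable {ρ e}

lemma grading_of_eq_zero {x : X} (hx : ρ x = 0) : grading ρ e x = e 0 := by
  rw [grading, if_pos hx]

lemma grading_of_isSuccLimit {x : X} (hx : Order.IsSuccLimit (ρ x)) :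
    grading ρ e x = sSup (grading ρ e '' below ρ x) := by
  rw [grading, if_neg (Ordinal.bot_eq_zero ▸ hx.ne_bot), if_pos hx, image_eq_range]

lemma grading_of_eq_add_one {x : X} {β : Ordinal} (hx : ρ x = β + 1) :
    grading ρ e x =
      rayGrading (rayOf ρ x) (sSup (grading ρ e '' below ρ x)) (e (ρ x + 1)) x := by
  have hsucc : ρ x = Order.succ β := hx.trans (Order.succ_eq_add_one β).symm
  rw [grading, if_neg (hsucc ▸ Order.succ_ne_bot β), if_neg (hsucc ▸ Order.not_isSuccLimit_succ β),
    image_eq_range]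

end Grading

section GradingSpec

variable {X : Type} [PartialOrder X] {ρ : X → Ordinal} {e : Ordinal → ℝ} {δ : Ordinal} {y : X}

variable (ρ e) in
def GradingInvariant (y : X) : Prop :=
  grading ρ e y < e (ρ y + 1) ∧ GradedBelow (grading ρ e) y

lemma grading_le_of_mem_below (he : StrictMonoOn e (Iic (δ + 1))) (hρδ : ∀ x, ρ x ≤ δ)
    (ih : ∀ w, ρ w < ρ y → GradingInvariant ρ e w) {w : X} (hw : w ∈ below ρ y) :
    grading ρ e w ≤ e (ρ y) :=
  have hy : ρ y ∈ Iic (δ + 1) := (hρδ y).trans le_self_add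
  (ih w hw.2).1.le.trans <|
    he.monotoneOn ((Order.add_one_le_of_lt hw.2).trans hy) hy (Order.add_one_le_of_lt hw.2)

lemma bddAbove_grading_below (he : StrictMonoOn e (Iic (δ + 1))) (hρδ : ∀ x, ρ x ≤ δ)
    (ih : ∀ w, ρ w < ρ y → GradingInvariant ρ e w) : BddAbove (grading ρ e '' below ρ y) :=
  ⟨e (ρ y), forall_mem_image.2 fun _ hw => grading_le_of_mem_below he hρδ ih hw⟩

lemma sSup_grading_below_le (hρ : IsRankFunction ρ) (he : StrictMonoOn e (Iic (δ + 1)))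
    (hρδ : ∀ x, ρ x ≤ δ) (ih : ∀ w, ρ w < ρ y → GradingInvariant ρ e w) (hy : ρ y ≠ 0) :
    sSup (grading ρ e '' below ρ y) ≤ e (ρ y) :=
  csSup_le ((hρ.below_nonempty hy).image _) <|
    forall_mem_image.2 fun _ hw => grading_le_of_mem_below he hρδ ih hw

lemma gradingInvariant_of_eq_zero (hρ : IsRankFunction ρ) (he : StrictMonoOn e (Iic (δ + 1)))
    (hy : ρ y = 0) : GradingInvariant ρ e y := by
  refine ⟨?_, fun x hxy => absurd (hρ.rank_lt_of_lt (Or.inl hy) hxy) (hy ▸ not_lt_zero)⟩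
  rw [grading_of_eq_zero hy, hy, zero_add]
  exact he (mem_Iic.2 zero_le) (mem_Iic.2 le_add_self) zero_lt_one

lemma gradingInvariant_of_isSuccLimit (htree : ∀ x : X, IsChain (· ≤ ·) {y | y ≤ x})
    (hρ : IsRankFunction ρ) (he : StrictMonoOn e (Iic (δ + 1))) (hρδ : ∀ x, ρ x ≤ δ)
    (ih : ∀ w, ρ w < ρ y → GradingInvariant ρ e w) (hy : Order.IsSuccLimit (ρ y)) :
    GradingInvariant ρ e y := by
  have hbdd := bddAbove_grading_below he hρδ ih
  have hℓy := grading_of_isSuccLimit (e := e) hy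
  refine ⟨hℓy ▸ (sSup_grading_below_le hρ he hρδ ih (Ordinal.bot_eq_zero ▸ hy.ne_bot)).trans_lt
    (he.lt_add_one_of_le (hρδ y)), fun x hxy => ⟨?_, ?_⟩⟩
  · have hxy' := hρ.rank_lt_of_lt (Or.inr hy) hxy
    obtain ⟨w, hxw, hwy, hw⟩ := hρ.exists_between_rank_eq hxy.le (Order.lt_add_one_iff.2 le_rfl)
      (by simpa [Order.succ_eq_add_one] using hy.succ_lt hxy')
    have hwy' : ρ w < ρ y := hw ▸ by simpa [Order.succ_eq_add_one] using hy.succ_lt hxy'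
    exact hℓy ▸ ((ih w hwy').2 x hxw).1.trans_le (le_csSup hbdd (mem_image_of_mem _ ⟨hwy, hwy'⟩))
  · rintro t ⟨hxt, hty⟩
    rcases hty.eq_or_lt with rfl | hty'
    · exact ⟨y, ⟨hxy.le, le_rfl⟩, rfl⟩
    exact exists_mem_Icc_eq_of_lt_sSup htree (S := below ρ y) (fun w hw => ⟨hw.1, (ih w hw.2).2⟩)
      ⟨hxy, hρ.rank_lt_of_lt (Or.inr hy) hxy⟩ hxt (hℓy ▸ hty')

lemma isRayGrading_grading (htree : ∀ x : X, IsChain (· ≤ ·) {y | y ≤ x}) (hρ : IsRankFunction ρ)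
    (hray : ∀ R : Set X, IsRay R → ∃ ψ : X → ℝ, StrictMonoOn ψ R ∧ (ψ '' R).OrdConnected)
    (he : StrictMonoOn e (Iic (δ + 1))) (hρδ : ∀ x, ρ x ≤ δ)
    (ih : ∀ w, ρ w < ρ y → GradingInvariant ρ e w) {β : Ordinal} (hy : ρ y = β + 1) :
    IsRayGrading (rayOf ρ y) (sSup (grading ρ e '' below ρ y)) (e (ρ y + 1)) (grading ρ e) := by
  obtain ⟨ψ, hψ, hψR⟩ := hray _ (hρ.isRay_rayOf hy)
  have hy0 : ρ y ≠ 0 := hy ▸ (Order.lt_add_one_iff.2 zero_le).ne'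
  have hsb := (sSup_grading_below_le hρ he hρδ ih hy0).trans_lt (he.lt_add_one_of_le (hρδ y))
  refine (isRayGrading_rayGrading (exists_isRayGrading hψ hψR ⟨y, mem_rayOf_self y⟩ hsb)).congr
    fun z hz => ?_
  rw [grading_of_eq_add_one (hz.1.trans hy), hρ.rayOf_eq_of_mem hy hz,
    below_eq_of_mem_rayOf htree hρ.1 hz, hz.1]

lemma gradingInvariant_of_eq_add_one [DenselyOrdered X]
    (htree : ∀ x : X, IsChain (· ≤ ·) {y | y ≤ x}) (hρ : IsRankFunction ρ)
    (hcompl : ∀ x y : X, ∀ S ⊆ Icc x y, S.Nonempty → ∃ z, IsLeast (Icc x y ∩ upperBounds S) z)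
    (hray : ∀ R : Set X, IsRay R → ∃ ψ : X → ℝ, StrictMonoOn ψ R ∧ (ψ '' R).OrdConnected)
    (he : StrictMonoOn e (Iic (δ + 1))) (hρδ : ∀ x, ρ x ≤ δ)
    (ih : ∀ w, ρ w < ρ y → GradingInvariant ρ e w) {β : Ordinal} (hy : ρ y = β + 1) :
    GradingInvariant ρ e y := by
  have hR := isRayGrading_grading htree hρ hray he hρδ ih hy
  have hbdd := bddAbove_grading_below he hρδ ih
  have hD : ∀ w ∈ below ρ y, GradedBelow (grading ρ e) w := fun w hw => (ih w hw.2).2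
  exact ⟨(hR.2.2.1 (mem_image_of_mem _ (mem_rayOf_self y))).2, fun x hxy =>
    ⟨lt_of_isRayGrading hρ.1 hD hbdd hR hxy,
      surjOn_of_isRayGrading hρ.1 hD hbdd hR htree (hρ.isRay_rayOf hy).isChain hcompl hxy⟩⟩

theorem gradingInvariant [DenselyOrdered X] (htree : ∀ x : X, IsChain (· ≤ ·) {y | y ≤ x})
    (hρ : IsRankFunction ρ)
    (hcompl : ∀ x y : X, ∀ S ⊆ Icc x y, S.Nonempty → ∃ z, IsLeast (Icc x y ∩ upperBounds S) z)
    (hray : ∀ R : Set X, IsRay R → ∃ ψ : X → ℝ, StrictMonoOn ψ R ∧ (ψ '' R).OrdConnected)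
    (he : StrictMonoOn e (Iic (δ + 1))) (hρδ : ∀ x, ρ x ≤ δ) (y : X) : GradingInvariant ρ e y := by
  induction y using (InvImage.wf ρ wellFounded_lt).induction with
  | _ y ih =>
  rcases Ordinal.zero_or_succ_or_isSuccLimit (ρ y) with hy | ⟨β, hy⟩ | hy
  · exact gradingInvariant_of_eq_zero hρ he hy
  · exact gradingInvariant_of_eq_add_one htree hρ hcompl hray he hρδ ih
      (hy.symm.trans (Order.succ_eq_add_one β))
  · exact gradingInvariant_of_isSuccLimit htree hρ he hρδ ih hy

end GradingSpec

lemma isContinuousGrading_of_surjOn {X : Type} [PartialOrder X]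
    (htree : ∀ x : X, IsChain (· ≤ ·) {y | y ≤ x}) {ℓ : X → ℝ} (hℓ : StrictMono ℓ)
    (hsurj : ∀ x y, x < y → SurjOn ℓ (Icc x y) (Icc (ℓ x) (ℓ y))) : IsContinuousGrading ℓ := by
  refine ⟨hℓ, fun x y hxy => ?_⟩
  have hle : ∀ a b : Icc x y, ℓ a ≤ ℓ b ↔ a ≤ b := fun a b =>
    (hℓ.strictMonoOn _).le_iff_le_of_isChain_s5 ((htree y).mono fun _ hz => hz.2) a.2 b.2
  let f : Icc x y → Icc (ℓ x) (ℓ y) := fun z => ⟨ℓ z, hℓ.monotone z.2.1, hℓ.monotone z.2.2⟩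
  have hf : f.Bijective := by
    refine ⟨fun a b hab => le_antisymm ((hle a b).1 ?_) ((hle b a).1 ?_), fun t => ?_⟩
    · exact (congrArg Subtype.val hab).le
    · exact (congrArg Subtype.val hab).ge
    · obtain ⟨z, hz, hzt⟩ := hsurj x y hxy t.2
      exact ⟨⟨z, hz⟩, Subtype.ext hzt⟩
  exact ⟨⟨Equiv.ofBijective f hf, fun {a b} => hle a b⟩, fun _ => rfl⟩

theorem stmt_5_general (X : Type) [PartialOrder X] (hX : IsBranchwiseReal X)
    (ρ : X → Ordinal) (hρ : IsRankFunction ρ)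
    (δ : Ordinal) (hδ : δ < (Cardinal.aleph 1).ord) (hbdd : ∀ x : X, ρ x ≤ δ) :
    ContinuouslyGradable X := by
  obtain ⟨⟨-, htree⟩, hiso, -⟩ := hX
  have hbranch : ∀ B : Set X, IsBranch B → ∃ ψ : X → ℝ, StrictMonoOn ψ B ∧ (ψ '' B).OrdConnected :=
    fun B hB => by
      obtain ⟨I, hI, ⟨g⟩⟩ := hiso B hB
      obtain ⟨ψ, hψ, hψB⟩ := exists_strictMonoOn_image_eq g
      exact ⟨ψ, hψ, hψB ▸ hI⟩
  have := denselyOrdered_of_branch htree hbranch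
  obtain ⟨e, he⟩ := exists_strictMonoOn_Iic_real <| by
    simpa [Order.succ_eq_add_one] using
      (Cardinal.isSuccLimit_ord (Cardinal.aleph0_le_aleph 1)).succ_lt hδ
  have hinv := gradingInvariant htree hρ
    (fun x y S hS hne => exists_isLeast_Icc_inter_upperBounds htree hbranch hS hne)
    (fun R hR => hR.exists_strictMonoOn hbranch) he hbdd
  exact ⟨grading ρ e, isContinuousGrading_of_surjOn htree (fun x y hxy => ((hinv y).2 x hxy).1)
    fun x y hxy => ((hinv y).2 x hxy).2⟩

/-- If a branchwise-real tree admits a bounded rank function into `ω₁`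
(one whose values are all at most some `δ < ω₁`), then it is continuously gradable. -/
theorem stmt_5 (X : Type) [PartialOrder X] (hX : IsBranchwiseReal X)
    (ρ : X → Ordinal) (hρ : IsRankFunction ρ)
    (hω₁ : ∀ x : X, ρ x < (Cardinal.aleph 1).ord)
    (δ : Ordinal) (hδ : δ < (Cardinal.aleph 1).ord) (hbdd : ∀ x : X, ρ x ≤ δ) :
    ContinuouslyGradable X :=
  stmt_5_general X hX ρ hρ δ hδ hbdd
end

section
/- Let X be a tree order with a rank function ρ, and let x ∈ X be non-terminal with ρ(x) equal to 0 or a limit ordinal. Then every connected component above x has rank ρ(x) + 1. -/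
/-- The rank of a component: the minimum rank of its elements. -/
noncomputable def componentRank {X : Type} [PartialOrder X] (ρ : X → Ordinal) (C : Set X) :
    Ordinal :=
  sInf (ρ '' C)

/-!
Since the fibre of `ρ` at `ρ x` is an antichain, everything strictly above `x` has rank at least
`ρ x + 1`. Conversely, ranks along a branch are downwards closed, so on a branch through `x` and
some `y` in the component the value `ρ x + 1` is attained, and by monotonicity it is attained
between `x` and `y`, hence inside the component.
-/

open Order

namespace IsRankFunction

variable {X : Type} [PartialOrder X] {ρ : X → Ordinal}

theorem add_one_le_of_lt (hρ : IsRankFunction ρ) {x z : X}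
    (hx : ρ x = 0 ∨ IsSuccLimit (ρ x)) (hxz : x < z) : ρ x + 1 ≤ ρ z :=
  Order.add_one_le_of_lt <| (hρ.1 hxz.le).lt_of_ne fun h =>
    hρ.2.2.1 _ hx rfl h.symm hxz.ne hxz.le

theorem exists_mem_Icc_rank_eq (hρ : IsRankFunction ρ) {x y : X} (hxy : x ≤ y)
    {α : Ordinal} (hxα : ρ x ≤ α) (hαy : α ≤ ρ y) : ∃ z ∈ Set.Icc x y, ρ z = α := by
  have hchain : IsChain (· ≤ ·) ({x, y} : Set X) := by
    rintro a (rfl | rfl) b (rfl | rfl) _ <;> simp [hxy]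
  obtain ⟨B, hB, hsub⟩ := hchain.exists_maxChain
  have hxB : x ∈ B := hsub (by simp)
  have hyB : y ∈ B := hsub (by simp)
  obtain ⟨z, hzB, rfl⟩ := hρ.2.1 B hB (ρ y) _ hαy ⟨y, hyB, rfl⟩
  rcases hB.1.total hxB hzB with hxz | hzx
  · rcases hB.1.total hzB hyB with hzy | hyz
    · exact ⟨z, ⟨hxz, hzy⟩, rfl⟩
    · exact ⟨y, ⟨hxy, le_rfl⟩, (hαy.antisymm (hρ.1 hyz)).symm⟩
  · exact ⟨x, ⟨le_rfl, hxy⟩, ((hρ.1 hzx).antisymm hxα).symm⟩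

end IsRankFunction

theorem stmt_8_general (X : Type) [PartialOrder X]
    (ρ : X → Ordinal) (hρ : IsRankFunction ρ) (x : X)
    (hx : ρ x = 0 ∨ Order.IsSuccLimit (ρ x)) :
    ∀ C ∈ ComponentsAbove x, componentRank ρ C = ρ x + 1 := by
  rintro C ⟨y, hxy, rfl⟩
  obtain ⟨z, ⟨hxz_le, hzy⟩, hz⟩ :=
    hρ.exists_mem_Icc_rank_eq hxy.le le_self_add (hρ.add_one_le_of_lt hx hxy)
  have hxz : x < z := hxz_le.lt_of_ne <| by
    rintro rfl
    exact (Order.lt_add_one_iff.2 le_rfl).ne hz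
  refine IsLeast.csInf_eq ⟨⟨z, ⟨z, hxz, hzy, le_rfl⟩, hz⟩, ?_⟩
  rintro _ ⟨w, ⟨v, hxv, -, hvw⟩, rfl⟩
  exact hρ.add_one_le_of_lt hx (hxv.trans_le hvw)

/-- In a ranked tree order, if `x` is non-terminal and `ρ x` is `0` or a limit,
then every connected component above `x` has rank `ρ x + 1`. -/
theorem stmt_8 (X : Type) [PartialOrder X] (hX : IsTreeOrder X)
    (ρ : X → Ordinal) (hρ : IsRankFunction ρ) (x : X) (hnt : ∃ y : X, x < y)
    (hx : ρ x = 0 ∨ Order.IsSuccLimit (ρ x)) :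
    ∀ C ∈ ComponentsAbove x, componentRank ρ C = ρ x + 1 :=
  stmt_8_general X ρ hρ x hx
end

section
/- Let X be a tree order with a rank function ρ, let f : X → X be an order-automorphism, let x ∈ X, and suppose f maps the connected component C above x onto the connected component f(C) above f(x). Then there is a coinitial interval I ⊆ C on which ρ is constantly equal to the rank ρ(C), such that f(I) is a coinitial interval of f(C) on which ρ is constantly equal to the rank ρ(f(C)). -/
/-!
The component `C` is an upper set which is directed downwards (two elements of `C` lie above
points below a common `y`, and those points are comparable because `{z | z ≤ y}` is a chain).
For a monotone, well-ordered `g`, the points of `C` where `g` attains its minimum on `C` form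
`C ∩ L` for the lower set `L = {c | g c ≤ min}`. Intersecting the two such sets for `ρ` and
`ρ ∘ f` gives `I`: it is order-convex as the intersection of an upper and a lower set, and
coinitial by directedness; `f` carries all of this over to `f '' C`.
-/

section ComponentsAbove

variable {X : Type} [PartialOrder X] {x : X} {C : Set X}

theorem isUpperSet_of_mem_componentsAbove (hC : C ∈ ComponentsAbove x) : IsUpperSet C := by
  obtain ⟨y, -, rfl⟩ := hC
  rintro a b hab ⟨w, hxw, hwy, hwa⟩
  exact ⟨w, hxw, hwy, hwa.trans hab⟩

theorem nonempty_of_mem_componentsAbove (hC : C ∈ ComponentsAbove x) : C.Nonempty := by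
  obtain ⟨y, hxy, rfl⟩ := hC
  exact ⟨y, y, hxy, le_rfl, le_rfl⟩

theorem directedOn_ge_of_mem_componentsAbove
    (hchain : ∀ y : X, IsChain (· ≤ ·) {z | z ≤ y}) (hC : C ∈ ComponentsAbove x) :
    DirectedOn (· ≥ ·) C := by
  obtain ⟨y, -, rfl⟩ := hC
  rintro a ⟨w₁, hxw₁, hw₁y, hw₁a⟩ b ⟨w₂, hxw₂, hw₂y, hw₂b⟩
  rcases (hchain y).total hw₁y hw₂y with h | h
  · exact ⟨w₁, ⟨w₁, hxw₁, hw₁y, le_rfl⟩, hw₁a, h.trans hw₂b⟩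
  · exact ⟨w₂, ⟨w₂, hxw₂, hw₂y, le_rfl⟩, h.trans hw₁a, hw₂b⟩

end ComponentsAbove

theorem exists_mem_inter_inter_le {X : Type*} [Preorder X] {C L₁ L₂ : Set X}
    (hC : DirectedOn (· ≥ ·) C) (hL₁ : IsLowerSet L₁) (hL₂ : IsLowerSet L₂)
    (h₁ : (C ∩ L₁).Nonempty) (h₂ : (C ∩ L₂).Nonempty) :
    ∀ c ∈ C, ∃ i ∈ C ∩ (L₁ ∩ L₂), i ≤ c := by
  obtain ⟨a, haC, haL₁⟩ := h₁
  obtain ⟨b, hbC, hbL₂⟩ := h₂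
  obtain ⟨w, hwC, hwa, hwb⟩ := hC a haC b hbC
  intro c hc
  obtain ⟨i, hiC, hiw, hic⟩ := hC w hwC c hc
  exact ⟨i, ⟨hiC, hL₁ (hiw.trans hwa) haL₁, hL₂ (hiw.trans hwb) hbL₂⟩, hic⟩

section MinLevel

variable {X α : Type*} [ConditionallyCompleteLinearOrder α] {g : X → α} {C : Set X}

theorem isLowerSet_setOf_le_sInf_image [Preorder X] (hg : Monotone g) :
    IsLowerSet {c | g c ≤ sInf (g '' C)} :=
  fun _ _ hab hb => (hg hab).trans hb

theorem inter_setOf_le_sInf_image_nonempty [WellFoundedLT α] (hC : C.Nonempty) :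
    (C ∩ {c | g c ≤ sInf (g '' C)}).Nonempty := by
  obtain ⟨c, hc, hgc⟩ := csInf_mem (hC.image g)
  exact ⟨c, hc, hgc.le⟩

theorem eq_sInf_image_of_le [WellFoundedLT α] {c : X} (hc : c ∈ C) (hle : g c ≤ sInf (g '' C)) :
    g c = sInf (g '' C) :=
  hle.antisymm ((isLeast_csInf ⟨_, Set.mem_image_of_mem g hc⟩).2 (Set.mem_image_of_mem g hc))

end MinLevel

theorem stmt_11_general (X : Type) [PartialOrder X] (hX : IsTreeOrder X)
    (ρ : X → Ordinal) (hρ : IsRankFunction ρ) (f : X ≃o X) (x : X)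
    (C : Set X) (hC : C ∈ ComponentsAbove x) :
    ∃ I : Set X, I ⊆ C ∧
      (∀ a ∈ I, ∀ b ∈ I, Set.Icc a b ⊆ I) ∧
      (∀ c ∈ C, ∃ i ∈ I, i ≤ c) ∧
      (∀ i ∈ I, ρ i = componentRank ρ C) ∧
      (∀ a ∈ f '' I, ∀ b ∈ f '' I, Set.Icc a b ⊆ f '' I) ∧
      (∀ c ∈ f '' C, ∃ j ∈ f '' I, j ≤ c) ∧
      (∀ j ∈ f '' I, ρ j = componentRank ρ (f '' C)) := by
  have hρf : componentRank ρ (f '' C) = sInf ((ρ ∘ f) '' C) := by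
    rw [componentRank, Set.image_image]; rfl
  have hmono : Monotone (ρ ∘ f) := hρ.1.comp f.monotone
  set I := C ∩ ({c | ρ c ≤ sInf (ρ '' C)} ∩ {c | (ρ ∘ f) c ≤ sInf ((ρ ∘ f) '' C)})
  have hne := nonempty_of_mem_componentsAbove hC
  have hI : I.OrdConnected := (isUpperSet_of_mem_componentsAbove hC).ordConnected.inter
    ((isLowerSet_setOf_le_sInf_image hρ.1).inter (isLowerSet_setOf_le_sInf_image hmono)).ordConnected
  have hcoinit : ∀ c ∈ C, ∃ i ∈ I, i ≤ c :=
    exists_mem_inter_inter_le (directedOn_ge_of_mem_componentsAbove hX.2 hC)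
      (isLowerSet_setOf_le_sInf_image hρ.1) (isLowerSet_setOf_le_sInf_image hmono)
      (inter_setOf_le_sInf_image_nonempty hne) (inter_setOf_le_sInf_image_nonempty hne)
  refine ⟨I, Set.inter_subset_left, fun a ha b hb => hI.out ha hb, hcoinit,
    fun i hi => eq_sInf_image_of_le hi.1 hi.2.1,
    fun a ha b hb => (Set.ordConnected_image (hs := hI) f).out ha hb, ?_, ?_⟩
  · rintro _ ⟨c, hc, rfl⟩
    obtain ⟨i, hi, hic⟩ := hcoinit c hc
    exact ⟨f i, Set.mem_image_of_mem f hi, f.monotone hic⟩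
  · rintro _ ⟨i, hi, rfl⟩
    exact hρf ▸ eq_sInf_image_of_le (g := ρ ∘ f) hi.1 hi.2.2

/-- If an order-automorphism `f` of a ranked tree order maps the component `C` above `x`
onto the component `f '' C` above `f x`, then there is a coinitial interval `I ⊆ C` of
constant rank `componentRank ρ C` whose image `f '' I` is a coinitial interval of
`f '' C` of constant rank `componentRank ρ (f '' C)`. -/
theorem stmt_11 (X : Type) [PartialOrder X] (hX : IsTreeOrder X)
    (ρ : X → Ordinal) (hρ : IsRankFunction ρ) (f : X ≃o X) (x : X)
    (C : Set X) (hC : C ∈ ComponentsAbove x) (hfC : f '' C ∈ ComponentsAbove (f x)) :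
    ∃ I : Set X, I ⊆ C ∧
      (∀ a ∈ I, ∀ b ∈ I, Set.Icc a b ⊆ I) ∧
      (∀ c ∈ C, ∃ i ∈ I, i ≤ c) ∧
      (∀ i ∈ I, ρ i = componentRank ρ C) ∧
      (∀ a ∈ f '' I, ∀ b ∈ f '' I, Set.Icc a b ⊆ f '' I) ∧
      (∀ c ∈ f '' C, ∃ j ∈ f '' I, j ≤ c) ∧
      (∀ j ∈ f '' I, ρ j = componentRank ρ (f '' C)) :=
  stmt_11_general X hX ρ hρ f x C hC
end

section
/- Let X be a tree order with a rank function ρ, let x ∈ X be non-terminal, and let C be a connected component above x. Then the rank ρ(C) = min{ρ(y) : y ∈ C} is a successor ordinal. -/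
/-!
Pick `w` of least rank `α` in the component `C = {z | ∃ w, x < w ≤ y, w ≤ z}` with moreover
`x < w ≤ y`, so that every `b` with `x < b ≤ w` lies in `C`. If `α` were `0` or a limit, then
`ρ x < α` because fibres at such ranks are antichains, hence even `ρ x + 1 < α`. Downward closure
of the ranks along a branch through `x < w` yields `b` with `x < b ≤ w` and `ρ b = ρ x + 1`,
an element of `C` of rank below `α`.
-/

namespace IsRankFunction

variable {X : Type} [PartialOrder X] {ρ : X → Ordinal} {x z : X}

theorem exists_rank_eq_of_lt (hρ : IsRankFunction ρ) (hxz : x < z) {β : Ordinal}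
    (hxβ : ρ x < β) (hβz : β ≤ ρ z) : ∃ b, x < b ∧ b ≤ z ∧ ρ b = β := by
  have hchain : IsChain (· ≤ ·) ({x, z} : Set X) := IsChain.pair hxz.le
  obtain ⟨B, hB, hxzB⟩ := hchain.exists_maxChain
  have hxB : x ∈ B := hxzB (by simp)
  have hzB : z ∈ B := hxzB (by simp)
  obtain ⟨b, hbB, hb⟩ := hρ.2.1 B hB (ρ z) β hβz ⟨z, hzB, rfl⟩
  have hxb : x < b := by
    rcases hB.1.total hxB hbB with h | h
    · exact h.lt_of_ne (by rintro rfl; exact hxβ.ne hb)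
    · exact absurd (hb ▸ hρ.1 h) hxβ.not_ge
  rcases hB.1.total hbB hzB with h | h
  · exact ⟨b, hxb, h, hb⟩
  · exact ⟨z, hxz, le_rfl, le_antisymm (hb ▸ hρ.1 h) hβz⟩

theorem rank_lt_of_lt_s12 (hρ : IsRankFunction ρ) (hz : ρ z = 0 ∨ Order.IsSuccLimit (ρ z))
    (hxz : x < z) : ρ x < ρ z :=
  (hρ.1 hxz.le).lt_of_ne fun h => hρ.2.2.1 (ρ z) hz h rfl hxz.ne hxz.le

theorem exists_rank_eq_add_one (hρ : IsRankFunction ρ) (hxz : x < z)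
    (hmin : ∀ b, x < b → b ≤ z → ρ z ≤ ρ b) : ∃ β, ρ z = β + 1 := by
  by_contra hnot_succ
  have hz : ρ z = 0 ∨ Order.IsSuccLimit (ρ z) := by
    rcases Ordinal.zero_or_succ_or_isSuccLimit (ρ z) with h | ⟨β, hβ⟩ | h
    · exact Or.inl h
    · exact (hnot_succ ⟨β, hβ.symm⟩).elim
    · exact Or.inr h
  have hlt := hρ.rank_lt_of_lt_s12 hz hxz
  have hlt_succ : ρ x + 1 < ρ z := by
    rcases hz with h | h
    · exact absurd (h ▸ hlt) not_lt_zero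
    · exact h.succ_lt hlt
  obtain ⟨b, hxb, hbz, hb⟩ := hρ.exists_rank_eq_of_lt hxz (lt_add_one (ρ x)) hlt_succ.le
  exact (hmin b hxb hbz).not_gt (hb ▸ hlt_succ)

end IsRankFunction

theorem stmt_12_general (X : Type) [PartialOrder X]
    (ρ : X → Ordinal) (hρ : IsRankFunction ρ) (x : X)
    (C : Set X) (hC : C ∈ ComponentsAbove x) :
    ∃ β : Ordinal, componentRank ρ C = β + 1 := by
  obtain ⟨y, hxy, rfl⟩ := hC
  set C := {z : X | ∃ w : X, x < w ∧ w ≤ y ∧ w ≤ z}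
  have mem_of_le {b : X} (hxb : x < b) (hby : b ≤ y) : b ∈ C := ⟨b, hxb, hby, le_rfl⟩
  obtain ⟨z, ⟨w, hxw, hwy, hwz⟩, hz⟩ := csInf_mem (s := ρ '' C) ⟨ρ y, y, mem_of_le hxy le_rfl, rfl⟩
  have hw : ρ w = componentRank ρ C :=
    le_antisymm ((hρ.1 hwz).trans_eq hz) (csInf_le' ⟨w, mem_of_le hxw hwy, rfl⟩)
  rw [← hw]
  refine hρ.exists_rank_eq_add_one hxw fun b hxb hbw => ?_
  exact hw ▸ csInf_le' ⟨b, mem_of_le hxb (hbw.trans hwy), rfl⟩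

/-- In a ranked tree order, the rank of any connected component above a
non-terminal point is a successor ordinal. -/
theorem stmt_12 (X : Type) [PartialOrder X] (hX : IsTreeOrder X)
    (ρ : X → Ordinal) (hρ : IsRankFunction ρ) (x : X) (hnt : ∃ y : X, x < y)
    (C : Set X) (hC : C ∈ ComponentsAbove x) :
    ∃ β : Ordinal, componentRank ρ C = β + 1 :=
  stmt_12_general X ρ hρ x C hC
end

section
/- There exists a family (S_A)_{A ⊆ ω} of subsets of (0,∞), indexed by the subsets of ω, such that each S_A is dense in (0,∞) and for any two distinct A, B ⊆ ω the linear orders S_A and S_B (with the order inherited from ℝ) are not order-isomorphic. -/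
/-!
Let `S_A` consist of the positive rationals, the whole intervals `(n+1, n+√2)`, and the
irrational endpoints `n+√2` for `n ∈ A`. Call `x` a start (an end) of uncountability if the
intervals of `S_A` just left of `x` are countable (uncountable) and those just right of it are
uncountable (countable). In `S_A` the starts are exactly the points `n+1` and the ends exactly the
points `n+√2` with `n ∈ A`. Both notions are order-theoretic, so an order isomorphism
`S_A ≃o S_B` maps starts onto starts, hence fixes each `n+1` (they form a copy of `ω`), and sends
an end `n+√2` of `S_A` to an end of `S_B` strictly between `n+1` and `n+2`, which must be `n+√2`.
-/

open Set

section Condensation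

variable {α β : Type*} [LinearOrder α] [LinearOrder β]

def StartsUncountable (x : α) : Prop :=
  (∃ a < x, (Ioo a x).Countable) ∧ ∀ b, x < b → ¬(Ioo x b).Countable

def EndsUncountable (x : α) : Prop :=
  (∀ a < x, ¬(Ioo a x).Countable) ∧ ∃ b, x < b ∧ (Ioo x b).Countable

theorem OrderIso.countable_Ioo_iff (f : α ≃o β) (a b : α) :
    (Ioo (f a) (f b)).Countable ↔ (Ioo a b).Countable := by
  rw [← f.image_Ioo]
  exact ⟨countable_of_injective_of_countable_image f.injective.injOn, fun h ↦ h.image f⟩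

theorem OrderIso.startsUncountable_apply_iff (f : α ≃o β) {x : α} :
    StartsUncountable (f x) ↔ StartsUncountable x := by
  simp only [StartsUncountable, f.surjective.exists, f.surjective.forall, f.lt_iff_lt,
    f.countable_Ioo_iff]

theorem OrderIso.endsUncountable_apply_iff (f : α ≃o β) {x : α} :
    EndsUncountable (f x) ↔ EndsUncountable x := by
  simp only [EndsUncountable, f.surjective.exists, f.surjective.forall, f.lt_iff_lt,
    f.countable_Ioo_iff]

theorem OrderIso.image_setOf_startsUncountable (f : α ≃o β) :
    f '' {x | StartsUncountable x} = {y | StartsUncountable y} := by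
  ext y
  rw [f.image_eq_preimage_symm]
  exact f.symm.startsUncountable_apply_iff

end Condensation

theorem StrictMono.comp_eq_of_image_range {α : Type*} [Preorder α] {β : Type*} [Preorder β]
    {e₁ : ℕ → α} {e₂ : ℕ → β} (h₁ : StrictMono e₁) (h₂ : StrictMono e₂) (f : α ≃o β)
    (hf : f '' range e₁ = range e₂) : f ∘ e₁ = e₂ :=
  ((f.strictMono.comp h₁).range_inj h₂).1 (by rw [range_comp, hf])

theorem Set.countable_Ioo_subtype_iff {α : Type*} [Preorder α] {s : Set α} (a b : s) :
    (Ioo a b).Countable ↔ (s ∩ Ioo (a : α) b).Countable := by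
  rw [← preimage_subtype_val_Ioo, ← Subtype.image_preimage_coe]
  exact ⟨fun h ↦ h.image _, countable_of_injective_of_countable_image Subtype.val_injective.injOn⟩

def denseFamily (A : Set ℕ) : Set ℝ :=
  {x | 0 < x ∧ x ∈ range ((↑) : ℚ → ℝ)} ∪ (⋃ n : ℕ, Ioo ((n : ℝ) + 1) (n + √2)) ∪
    (fun n : ℕ ↦ (n : ℝ) + √2) '' A

namespace denseFamily

variable {A : Set ℕ}

theorem ratCast_mem {q : ℚ} (hq : 0 < (q : ℝ)) : (q : ℝ) ∈ denseFamily A :=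
  Or.inl (Or.inl ⟨hq, q, rfl⟩)

theorem natCast_add_one_mem (n : ℕ) : (n : ℝ) + 1 ∈ denseFamily A := by
  simpa using ratCast_mem (A := A) (q := n + 1) (by positivity)

theorem natCast_add_sqrt_two_mem_iff {n : ℕ} : (n : ℝ) + √2 ∈ denseFamily A ↔ n ∈ A := by
  refine ⟨?_, fun h ↦ Or.inr ⟨n, h, rfl⟩⟩
  rintro ((⟨-, q, hq⟩ | hx) | ⟨k, hk, hkn⟩)
  · exact absurd ⟨q, hq⟩ (irrational_sqrt_two.natCast_add n)
  · obtain ⟨m, hm₁, hm₂⟩ := mem_iUnion.1 hx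
    have hnm : (n : ℝ) < m := by linarith
    have hmn : (m : ℝ) < n + 1 := by linarith [Real.sqrt_two_lt_three_halves]
    norm_cast at hnm hmn
    omega
  · rwa [← Nat.cast_injective (add_right_cancel hkn)]

theorem Ioo_subset (n : ℕ) : Ioo ((n : ℝ) + 1) (n + √2) ⊆ denseFamily A :=
  fun _ hx ↦ Or.inl (Or.inr (mem_iUnion.2 ⟨n, hx⟩))

theorem pos_of_mem {x : ℝ} (hx : x ∈ denseFamily A) : 0 < x := by
  rcases hx with (⟨hx, -⟩ | hx) | ⟨n, -, rfl⟩
  · exact hx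
  · obtain ⟨n, hn, -⟩ := mem_iUnion.1 hx
    exact lt_trans (by positivity) hn
  · positivity

theorem exists_mem_btwn {a b : ℝ} (ha : 0 ≤ a) (hab : a < b) :
    ∃ x ∈ denseFamily A, a < x ∧ x < b := by
  obtain ⟨q, haq, hqb⟩ := exists_rat_btwn hab
  exact ⟨q, ratCast_mem (ha.trans_lt haq), haq, hqb⟩

theorem countable_inter_Ioo_iff {u v : ℝ} (huv : u < v) :
    (denseFamily A ∩ Ioo u v).Countable ↔ ∀ n : ℕ, v ≤ n + 1 ∨ n + √2 ≤ u := by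
  refine ⟨fun h n ↦ ?_, fun h ↦ ?_⟩
  · by_contra! hn
    have hsub : Ioo (max u (n + 1)) (min v (n + √2)) ⊆ denseFamily A ∩ Ioo u v := by
      rw [← Ioo_inter_Ioo, inter_comm]
      exact inter_subset_inter_left _ (Ioo_subset n)
    have hle := Cardinal.Real.Ioo_countable_iff.1 (h.mono hsub)
    simp only [min_le_iff, le_max_iff] at hle
    rcases hle with (h | h) | (h | h) <;> linarith [Real.one_lt_sqrt_two]
  · refine ((countable_range ((↑) : ℚ → ℝ)).union
      (countable_range fun n : ℕ ↦ (n : ℝ) + √2)).mono ?_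
    rintro x ⟨(⟨-, hq⟩ | hx) | ⟨n, -, rfl⟩, hxu, hxv⟩
    · exact Or.inl hq
    · obtain ⟨n, hn₁, hn₂⟩ := mem_iUnion.1 hx
      rcases h n with h | h <;> linarith
    · exact Or.inr ⟨n, rfl⟩

theorem countable_Ioo_iff {a b : denseFamily A} (hab : a < b) :
    (Ioo a b).Countable ↔ ∀ n : ℕ, (b : ℝ) ≤ n + 1 ∨ n + √2 ≤ (a : ℝ) := by
  rw [countable_Ioo_subtype_iff, countable_inter_Ioo_iff hab]

theorem startsUncountable_iff (x : denseFamily A) :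
    StartsUncountable x ↔ ∃ n : ℕ, (x : ℝ) = n + 1 := by
  constructor
  · rintro ⟨⟨a, hax, hac⟩, hR⟩
    rw [countable_Ioo_iff hax] at hac
    have marker_near : ∀ b : ℝ, (x : ℝ) < b → ∃ n : ℕ, (x : ℝ) ≤ n + 1 ∧ (n : ℝ) + 1 < b := by
      intro b hxb
      obtain ⟨c, hc, hxc, hcb⟩ := exists_mem_btwn (A := A) (pos_of_mem x.2).le hxb
      have hxc' : x < ⟨c, hc⟩ := hxc
      have hcount := hR _ hxc'
      rw [countable_Ioo_iff hxc'] at hcount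
      push Not at hcount
      obtain ⟨n, hn₁, hn₂⟩ := hcount
      exact ⟨n, (hac n).resolve_right fun h ↦ by linarith [show (a : ℝ) < x from hax],
        hn₁.trans hcb⟩
    obtain ⟨n, hxn, hn⟩ := marker_near (x + 1) (by linarith)
    refine ⟨n, le_antisymm hxn (not_lt.1 fun hlt ↦ ?_)⟩
    obtain ⟨m, hxm, hmn⟩ := marker_near _ hlt
    have : m < n := by exact_mod_cast (by linarith : (m : ℝ) < n)
    have : (m : ℝ) + 1 ≤ n := by exact_mod_cast this
    linarith
  · rintro ⟨n, hxn⟩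
    have ha : (n : ℝ) + 1 / 2 ∈ denseFamily A := by
      simpa using ratCast_mem (A := A) (q := n + 1 / 2) (by positivity)
    have hax : (⟨_, ha⟩ : denseFamily A) < x := show (n : ℝ) + 1 / 2 < x by linarith
    refine ⟨⟨_, hax, (countable_Ioo_iff hax).2 fun m ↦ ?_⟩, fun b hxb ↦ ?_⟩
    · rcases le_or_gt n m with hnm | hmn
      · have : (n : ℝ) ≤ m := by exact_mod_cast hnm
        left; linarith
      · have : (m : ℝ) + 1 ≤ n := by exact_mod_cast hmn
        right; show (m : ℝ) + √2 ≤ n + 1 / 2; linarith [Real.sqrt_two_lt_three_halves]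
    · rw [countable_Ioo_iff hxb]
      push Not
      exact ⟨n, by linarith [show (x : ℝ) < b from hxb], by linarith [Real.one_lt_sqrt_two]⟩

theorem endsUncountable_iff (x : denseFamily A) :
    EndsUncountable x ↔ ∃ n ∈ A, (x : ℝ) = n + √2 := by
  constructor
  · rintro ⟨hL, b, hxb, hbc⟩
    rw [countable_Ioo_iff hxb] at hbc
    have end_near : ∀ a : ℝ, a < x → ∃ n : ℕ, a < n + √2 ∧ (n : ℝ) + √2 ≤ x := by
      intro a hax
      obtain ⟨c, hc, hac, hcx⟩ :=
        exists_mem_btwn (A := A) (le_max_right a 0) (max_lt hax (pos_of_mem x.2))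
      have hcx' : (⟨c, hc⟩ : denseFamily A) < x := hcx
      have hcount := hL _ hcx'
      rw [countable_Ioo_iff hcx'] at hcount
      push Not at hcount
      obtain ⟨n, hn₁, hn₂⟩ := hcount
      exact ⟨n, (le_max_left a 0).trans_lt (hac.trans hn₂),
        (hbc n).resolve_left fun h ↦ by linarith [show (x : ℝ) < b from hxb]⟩
    obtain ⟨n, hn, hnx⟩ := end_near (x - 1) (by linarith)
    have hxn : (x : ℝ) = n + √2 := le_antisymm (not_lt.1 fun hlt ↦ ?_) hnx
    · exact ⟨n, natCast_add_sqrt_two_mem_iff.1 (hxn ▸ x.2), hxn⟩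
    obtain ⟨m, hm, hmx⟩ := end_near _ hlt
    have : n < m := by exact_mod_cast (by linarith : (n : ℝ) < m)
    have : (n : ℝ) + 1 ≤ m := by exact_mod_cast this
    linarith
  · rintro ⟨n, -, hxn⟩
    have hb : (n : ℝ) + 2 ∈ denseFamily A := by
      simpa using ratCast_mem (A := A) (q := n + 2) (by positivity)
    have hxb : x < ⟨_, hb⟩ := show (x : ℝ) < n + 2 by linarith [Real.sqrt_two_lt_three_halves]
    refine ⟨fun a hax ↦ ?_, _, hxb, (countable_Ioo_iff hxb).2 fun m ↦ ?_⟩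
    · rw [countable_Ioo_iff hax]
      push Not
      exact ⟨n, by linarith [Real.one_lt_sqrt_two], by linarith [show (a : ℝ) < x from hax]⟩
    · rcases le_or_gt m n with hmn | hnm
      · have : (m : ℝ) ≤ n := by exact_mod_cast hmn
        right; linarith
      · have : (n : ℝ) + 1 ≤ m := by exact_mod_cast hnm
        left; show (n : ℝ) + 2 ≤ m + 1; linarith

def marker (A : Set ℕ) (n : ℕ) : denseFamily A :=
  ⟨n + 1, natCast_add_one_mem n⟩

theorem strictMono_marker : StrictMono (marker A) := fun m n h ↦
  show (m : ℝ) + 1 < n + 1 by gcongr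

theorem range_marker : range (marker A) = {x | StartsUncountable x} := by
  ext x
  simp [startsUncountable_iff, marker, Subtype.ext_iff, eq_comm]

theorem orderIso_apply_marker {B : Set ℕ} (f : denseFamily A ≃o denseFamily B) (n : ℕ) :
    f (marker A n) = marker B n :=
  congrFun (strictMono_marker.comp_eq_of_image_range strictMono_marker f
    (by rw [range_marker, range_marker, f.image_setOf_startsUncountable])) n

theorem isEmpty_orderIso_of_mem_of_notMem {B : Set ℕ} {n : ℕ} (hA : n ∈ A) (hB : n ∉ B) :
    IsEmpty (denseFamily A ≃o denseFamily B) := by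
  refine ⟨fun f ↦ hB ?_⟩
  let q : denseFamily A := ⟨n + √2, natCast_add_sqrt_two_mem_iff.2 hA⟩
  obtain ⟨m, hmB, hm⟩ := (endsUncountable_iff (f q)).1
    (f.endsUncountable_apply_iff.2 ((endsUncountable_iff q).2 ⟨n, hA, rfl⟩))
  have h₁ : marker B n < f q := by
    rw [← orderIso_apply_marker f]
    exact f.strictMono (show (n : ℝ) + 1 < n + √2 by linarith [Real.one_lt_sqrt_two])
  have h₂ : f q < marker B (n + 1) := by
    rw [← orderIso_apply_marker f]
    exact f.strictMono (show (n : ℝ) + √2 < (n + 1 : ℕ) + 1 by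
      push_cast; linarith [Real.sqrt_two_lt_three_halves])
  change (n : ℝ) + 1 < f q at h₁
  change (f q : ℝ) < (n + 1 : ℕ) + 1 at h₂
  rw [hm] at h₁ h₂
  push_cast at h₂
  have hnm : (n : ℝ) < m + 1 := by linarith [Real.sqrt_two_lt_three_halves]
  have hmn : (m : ℝ) < n + 1 := by linarith [Real.one_lt_sqrt_two]
  norm_cast at hnm hmn
  rwa [show m = n by omega] at hmB

end denseFamily

/-- There is a family `(S_A)_{A ⊆ ω}` of subsets of `(0,∞)`, each dense in `(0,∞)`,
which are pairwise non-order-isomorphic as suborders of ℝ. -/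
theorem stmt_14 :
    ∃ S : Set ℕ → Set ℝ,
      (∀ A : Set ℕ, S A ⊆ Set.Ioi (0:ℝ)) ∧
      (∀ A : Set ℕ, ∀ a b : ℝ, 0 ≤ a → a < b → ∃ x ∈ S A, a < x ∧ x < b) ∧
      (∀ A B : Set ℕ, A ≠ B → IsEmpty ((S A) ≃o (S B))) := by
  refine ⟨denseFamily, fun A x hx ↦ denseFamily.pos_of_mem hx,
    fun A a b ha hab ↦ denseFamily.exists_mem_btwn ha hab, fun A B hAB ↦ ?_⟩
  obtain ⟨n, hn⟩ := not_forall.1 (mt Set.ext hAB)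
  by_cases hA : n ∈ A
  · exact denseFamily.isEmpty_orderIso_of_mem_of_notMem hA (by tauto)
  · exact ⟨fun f ↦ (denseFamily.isEmpty_orderIso_of_mem_of_notMem (by tauto) hA).false f.symm⟩
end

section
/- Let a ≥ 0 be real, let κ be a nonempty set, and let r : [0,a) → κ be piecewise constant to the right: for every t ∈ [0,a) there is ε > 0 such that r is constant on [t, t+ε). Then the set of value-change points of r — those t ∈ [0,a) such that for every ε > 0 there is s ∈ (t−ε, t) ∩ [0,a) with r(s) ≠ r(t) — is well-ordered by the usual order on ℝ. -/
/-!
Let `m` be the infimum of a nonempty set `S` of value-change points. Since `r` is constant on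
some `[m, m + ε)`, no value-change point lies in `(m, m + ε)`; as points of `S` come arbitrarily
close to `m` from above, `m` itself belongs to `S`.
-/

open Set

theorem csInf_mem_of_disjoint_Ioo {α : Type*} [ConditionallyCompleteLinearOrder α] {S : Set α}
    (hne : S.Nonempty) (hbdd : BddBelow S) {u : α} (hu : sInf S < u)
    (hgap : Disjoint S (Ioo (sInf S) u)) : sInf S ∈ S := by
  obtain ⟨t, htS, htu⟩ := exists_lt_of_csInf_lt hne hu
  rcases (csInf_le hbdd htS).eq_or_lt with heq | hlt
  · exact heq ▸ htS
  · exact absurd ⟨hlt, htu⟩ (disjoint_left.1 hgap htS)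

theorem not_forall_exists_ne_of_eqOn_Ico {C : Type} {r : ℝ → C} {a m u t : ℝ}
    (hconst : ∀ s, m ≤ s → s < u → s < a → r s = r m) (hmt : m < t) (htu : t < u) (hta : t < a) :
    ¬ ∀ ε > (0 : ℝ), ∃ s, t - ε < s ∧ s < t ∧ 0 ≤ s ∧ r s ≠ r t := by
  intro hchange
  obtain ⟨s, hms, hst, -, hne⟩ := hchange (t - m) (sub_pos.2 hmt)
  rw [sub_sub_cancel] at hms
  exact hne ((hconst s hms.le (hst.trans htu) (hst.trans hta)).trans
    (hconst t hmt.le htu hta).symm)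

theorem stmt_19_general (C : Type) (a : ℝ) (r : ℝ → C)
    (hr : ∀ t : ℝ, 0 ≤ t → t < a →
      ∃ ε > (0:ℝ), ∀ s : ℝ, t ≤ s → s < t + ε → s < a → r s = r t) :
    ∀ S : Set ℝ,
      S ⊆ {t : ℝ | (0 ≤ t ∧ t < a) ∧
        ∀ ε > (0:ℝ), ∃ s : ℝ, t - ε < s ∧ s < t ∧ 0 ≤ s ∧ r s ≠ r t} →
      S.Nonempty → ∃ m ∈ S, ∀ s ∈ S, m ≤ s := by
  intro S hS hSne
  have hbdd : BddBelow S := ⟨0, fun t ht => (hS ht).1.1⟩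
  obtain ⟨t₀, ht₀⟩ := hSne
  have hm0 : 0 ≤ sInf S := le_csInf ⟨t₀, ht₀⟩ fun t ht => (hS ht).1.1
  have hma : sInf S < a := (csInf_le hbdd ht₀).trans_lt (hS ht₀).1.2
  obtain ⟨ε, hε, hconst⟩ := hr (sInf S) hm0 hma
  have hgap : Disjoint S (Ioo (sInf S) (sInf S + ε)) := disjoint_left.2 fun t ht htI =>
    not_forall_exists_ne_of_eqOn_Ico hconst htI.1 htI.2 (hS ht).1.2 (hS ht).2
  exact ⟨sInf S, csInf_mem_of_disjoint_Ioo ⟨t₀, ht₀⟩ hbdd (lt_add_of_pos_right _ hε) hgap,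
    fun s hs => csInf_le hbdd hs⟩

/-- If `r : [0,a) → C` is piecewise constant to the right, then its set of
value-change points is well-ordered by the usual order on ℝ: every nonempty
subset of it has a least element. -/
theorem stmt_19 (C : Type) (hne : Nonempty C) (a : ℝ) (ha : 0 ≤ a) (r : ℝ → C)
    (hr : ∀ t : ℝ, 0 ≤ t → t < a →
      ∃ ε > (0:ℝ), ∀ s : ℝ, t ≤ s → s < t + ε → s < a → r s = r t) :
    ∀ S : Set ℝ,
      S ⊆ {t : ℝ | (0 ≤ t ∧ t < a) ∧
        ∀ ε > (0:ℝ), ∃ s : ℝ, t - ε < s ∧ s < t ∧ 0 ≤ s ∧ r s ≠ r t} →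
      S.Nonempty → ∃ m ∈ S, ∀ s ∈ S, m ≤ s :=
  stmt_19_general C a r hr
end
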